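/- arXiv:0710.4424 — 5 statements merged into one kernel-verified Lean document; each statement's English description precedes it below -/
import Mathlib

section
/- Let B be a collection of r-element subsets of [n] and let Q(B) be the convex hull of the indicator vectors e_B for B in B. Then B is the collection of bases of a matroid if and only if every edge of Q(B) is a parallel translate of e_i - e_j for some i, j in [n]. -/
open Finset
open scoped Pointwise

/-- The indicator vector `e_B ∈ ℝⁿ` of a subset `B ⊆ [n]`. -/
def indVec (n : ℕ) (B : Finset (Fin n)) : Fin n → ℝ := fun i => if i ∈ B then 1 else 0

/-- A collection of subsets of `[n]` is the collection of bases of a matroid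
(possibly the empty matroid) iff it satisfies the basis exchange axiom. -/
def IsBases {n : ℕ} (𝓑 : Finset (Finset (Fin n))) : Prop :=
  ∀ B₁ ∈ 𝓑, ∀ B₂ ∈ 𝓑, ∀ b₁ ∈ B₁ \ B₂, ∃ b₂ ∈ B₂ \ B₁, insert b₂ (B₁.erase b₁) ∈ 𝓑

/-- The matroid (basis) polytope: convex hull of indicator vectors of the bases. -/
def polytope {n : ℕ} (𝓑 : Finset (Finset (Fin n))) : Set (Fin n → ℝ) :=
  convexHull ℝ (indVec n '' ↑𝓑)

/-- The (affine) dimension of a subset of ℝⁿ. -/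
noncomputable def polyDim {n : ℕ} (F : Set (Fin n → ℝ)) : ℕ :=
  Module.finrank ℝ (affineSpan ℝ F).direction

/-- An edge of a polytope `P` is a one-dimensional (exposed) face. -/
def IsEdge {n : ℕ} (P F : Set (Fin n → ℝ)) : Prop :=
  IsExposed ℝ P F ∧ polyDim F = 1

/-!
An exposed face of `Q(𝓑)` is the convex hull of the `e_B` whose `B ∈ 𝓑` maximize a linear
functional (Krein–Milman), i.e. a weight `w` on `[n]`. If `𝓑` satisfies basis exchange, take two
distinct maximizers `C₀, C₁` and the lightest element `x` of `C₀ ∆ C₁`, say `x ∈ C₀`: exchanging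
`x` out of `C₀` yields another maximizer differing from `C₀` by one swap, so every edge is
parallel to some `e_i - e_j`. Conversely, given `B₁, B₂ ∈ 𝓑` and `b ∈ B₁ \ B₂`, a lexicographic
combination of three weights exposes an edge `[e_{B₁}, e_{Bs}]` with `b ∉ Bs ⊆ B₁ ∪ B₂`; its
direction being some `e_i - e_j` forces `Bs = B₁ - b + c` with `c ∈ B₂ \ B₁`.
-/

open scoped symmDiff

noncomputable def maximizers {α : Type*} (φ : α → ℝ) (s : Finset α) : Finset α :=
  {a ∈ s | ∀ b ∈ s, φ b ≤ φ a}

section Maximizers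

variable {α : Type*} {φ : α → ℝ} {s : Finset α} {a b : α}

lemma mem_maximizers : a ∈ maximizers φ s ↔ a ∈ s ∧ ∀ b ∈ s, φ b ≤ φ a := by
  simp [maximizers]

lemma mem_maximizers_iff_of_mem (hb : b ∈ maximizers φ s) :
    a ∈ maximizers φ s ↔ a ∈ s ∧ φ b ≤ φ a :=
  ⟨fun ha => ⟨(mem_maximizers.1 ha).1, (mem_maximizers.1 ha).2 b (mem_maximizers.1 hb).1⟩,
    fun ⟨ha, hba⟩ => mem_maximizers.2 ⟨ha, fun c hc => (mem_maximizers.1 hb).2 c hc |>.trans hba⟩⟩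

lemma exists_mem_maximizers (φ : α → ℝ) (hs : s.Nonempty) : ∃ a, a ∈ maximizers φ s := by
  obtain ⟨a, ha, hmax⟩ := s.exists_max_image φ hs
  exact ⟨a, mem_maximizers.2 ⟨ha, hmax⟩⟩

lemma exists_maximizers_mul_add_eq (φ ψ : α → ℝ) (s : Finset α) :
    ∃ N : ℝ, maximizers (fun a => N * φ a + ψ a) s = maximizers ψ (maximizers φ s) := by
  have hN : ∀ᶠ N in Filter.atTop, ∀ p ∈ s ×ˢ s,
      φ p.2 < φ p.1 → ψ p.2 - ψ p.1 < N * (φ p.1 - φ p.2) := by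
    rw [Filter.eventually_all_finset]
    intro p _
    by_cases hp : φ p.2 < φ p.1
    · filter_upwards [Filter.eventually_gt_atTop ((ψ p.2 - ψ p.1) / (φ p.1 - φ p.2))]
        with N hN _
      rwa [div_lt_iff₀ (sub_pos.2 hp)] at hN
    · exact Filter.Eventually.of_forall fun _ h => absurd h hp
  obtain ⟨N, hN⟩ := hN.exists
  refine ⟨N, Finset.ext fun a => ?_⟩
  simp only [mem_maximizers]
  constructor
  · rintro ⟨ha, hmax⟩
    have hφ : ∀ b ∈ s, φ b ≤ φ a := fun b hb => not_lt.1 fun hlt => by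
      linarith [hmax b hb, hN (b, a) (Finset.mem_product.2 ⟨hb, ha⟩) hlt]
    refine ⟨⟨ha, hφ⟩, fun b hb => ?_⟩
    have := hmax b hb.1
    rw [le_antisymm (hφ b hb.1) (hb.2 a ha)] at this
    linarith
  · rintro ⟨⟨ha, hφ⟩, hψ⟩
    refine ⟨ha, fun b hb => ?_⟩
    rcases (hφ b hb).lt_or_eq with hlt | heq
    · linarith [hN (a, b) (Finset.mem_product.2 ⟨ha, hb⟩) hlt]
    · have := hψ b ⟨hb, fun c hc => heq ▸ hφ c hc⟩
      rw [heq]; linarith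

end Maximizers

section ExposedFaces

variable {E : Type*} [AddCommGroup E] [Module ℝ E] [TopologicalSpace E] [T2Space E]
  [IsTopologicalAddGroup E] [ContinuousSMul ℝ E] [LocallyConvexSpace ℝ E]

/-- Krein–Milman reduces this to the fact that the extreme points of `convexHull ℝ S` lie
in `S`. -/
lemma ContinuousLinearMap.toExposed_convexHull (l : StrongDual ℝ E) {S : Set E}
    (hS : S.Finite) : l.toExposed (convexHull ℝ S) = convexHull ℝ (l.toExposed S) := by
  have hexp : IsExposed ℝ (convexHull ℝ S) (l.toExposed (convexHull ℝ S)) :=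
    ContinuousLinearMap.toExposed.isExposed
  apply Set.Subset.antisymm
  · have hcompact := hexp.isCompact (hS.isCompact_convexHull ℝ)
    rw [← closure_convexHull_extremePoints hcompact (hexp.convex (convex_convexHull ℝ S)),
      (hS.subset fun x hx => hx.1).isClosed_convexHull ℝ |>.closure_subset_iff]
    refine convexHull_mono fun x hx => ⟨?_, fun y hy => hx.1.2 y (subset_convexHull ℝ S hy)⟩
    exact extremePoints_convexHull_subset (hexp.isExtreme.extremePoints_subset_extremePoints hx)
  · refine convexHull_min (fun x hx => ⟨subset_convexHull ℝ S hx.1, fun y hy => ?_⟩)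
      (hexp.convex (convex_convexHull ℝ S))
    exact convexHull_min (fun z hz => hx.2 z hz) (convex_halfSpace_le l.isLinear (l x)) hy

end ExposedFaces

lemma ContinuousLinearMap.toExposed_image {α E : Type*} [AddCommGroup E] [Module ℝ E]
    [TopologicalSpace E] (l : StrongDual ℝ E) (f : α → E) (s : Finset α) :
    l.toExposed (f '' s) = f '' (maximizers (l ∘ f) s) := by
  ext x
  constructor
  · rintro ⟨⟨a, ha, rfl⟩, hmax⟩
    exact ⟨a, mem_maximizers.2 ⟨ha, fun b hb => hmax _ ⟨b, hb, rfl⟩⟩, rfl⟩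
  · rintro ⟨a, ha, rfl⟩
    exact ⟨⟨a, (mem_maximizers.1 ha).1, rfl⟩, by
      rintro _ ⟨b, hb, rfl⟩
      exact (mem_maximizers.1 ha).2 b hb⟩

section IndVec

variable {n : ℕ}

lemma indVec_injective : Function.Injective (indVec n) := by
  intro B C h
  ext i
  have := congrFun h i
  by_cases hB : i ∈ B <;> by_cases hC : i ∈ C <;> simp_all [indVec]

lemma indVec_eq_sum (B : Finset (Fin n)) : indVec n B = ∑ i ∈ B, indVec n {i} := by
  ext j
  simp [indVec, Finset.sum_apply]

lemma indVec_insert_erase_sub {B : Finset (Fin n)} {x y : Fin n} (hx : x ∈ B) (hy : y ∉ B) :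
    indVec n (insert y (B.erase x)) - indVec n B = indVec n {y} - indVec n {x} := by
  ext j
  have hyx : y ≠ x := ne_of_mem_of_not_mem hx hy |>.symm
  by_cases hjy : j = y <;> by_cases hjx : j = x <;> simp_all [indVec]

lemma dotProduct_indVec (w : Fin n → ℝ) (B : Finset (Fin n)) :
    w ⬝ᵥ indVec n B = ∑ i ∈ B, w i := by
  simp [dotProduct, indVec, Finset.sum_ite_mem]

lemma indVec_dotProduct_indVec (A B : Finset (Fin n)) :
    indVec n A ⬝ᵥ indVec n B = #(A ∩ B) := by
  simp [dotProduct_indVec, indVec, Finset.inter_comm]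

lemma indVec_singleton_dotProduct_indVec (b : Fin n) (B : Finset (Fin n)) :
    indVec n {b} ⬝ᵥ indVec n B = if b ∈ B then 1 else 0 := by
  rw [indVec_dotProduct_indVec, Finset.singleton_inter]
  split_ifs <;> simp

noncomputable def dotProductCLM (w : Fin n → ℝ) : StrongDual ℝ (Fin n → ℝ) :=
  LinearMap.toContinuousLinearMap (dotProductEquiv ℝ (Fin n) w)

@[simp]
lemma dotProductCLM_apply (w x : Fin n → ℝ) : dotProductCLM w x = w ⬝ᵥ x := rfl

lemma toExposed_polytope (l : StrongDual ℝ (Fin n → ℝ)) (𝓑 : Finset (Finset (Fin n))) :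
    l.toExposed (polytope 𝓑) = convexHull ℝ (indVec n '' maximizers (l ∘ indVec n) 𝓑) := by
  rw [polytope, l.toExposed_convexHull ((𝓑.finite_toSet).image _), l.toExposed_image]

lemma direction_toExposed_polytope (l : StrongDual ℝ (Fin n → ℝ)) (𝓑 : Finset (Finset (Fin n))) :
    (affineSpan ℝ (l.toExposed (polytope 𝓑))).direction =
      vectorSpan ℝ (indVec n '' maximizers (l ∘ indVec n) 𝓑) := by
  rw [toExposed_polytope, affineSpan_convexHull, direction_affineSpan]

end IndVec

open scoped symmDiff

section Forward

variable {n : ℕ} {𝓑 : Finset (Finset (Fin n))}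

lemma sum_insert_erase {g : Fin n → ℝ} {B : Finset (Fin n)} {x y : Fin n} (hx : x ∈ B)
    (hy : y ∉ B) : ∑ i ∈ insert y (B.erase x), g i = ∑ i ∈ B, g i - g x + g y := by
  rw [Finset.sum_insert (fun h => hy (Finset.mem_of_mem_erase h)), Finset.sum_erase_eq_sub hx]
  ring

/-- Exchanging the element of `C₀ ∆ C₁` of least weight stays among the maximizers. -/
lemma IsBases.exists_exchange_mem_maximizers (h𝓑 : IsBases 𝓑) (g : Fin n → ℝ)
    {C₀ C₁ : Finset (Fin n)} (h₀ : C₀ ∈ maximizers (fun B => ∑ i ∈ B, g i) 𝓑)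
    (h₁ : C₁ ∈ maximizers (fun B => ∑ i ∈ B, g i) 𝓑) (hne : C₀ ≠ C₁) :
    ∃ D ∈ maximizers (fun B => ∑ i ∈ B, g i) 𝓑, ∃ x ∈ D, ∃ y, y ∉ D ∧
      insert y (D.erase x) ∈ maximizers (fun B => ∑ i ∈ B, g i) 𝓑 := by
  obtain ⟨x, hx, hmin⟩ := (C₀ ∆ C₁).exists_min_image g (Finset.symmDiff_nonempty.2 hne)
  wlog hx₀ : x ∈ C₀ \ C₁ generalizing C₀ C₁
  · rw [Finset.mem_sdiff] at hx₀
    exact this h₁ h₀ hne.symm (symmDiff_comm C₀ C₁ ▸ hx) (symmDiff_comm C₀ C₁ ▸ hmin)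
      (Finset.mem_sdiff.2 ((Finset.mem_symmDiff.1 hx).resolve_left hx₀))
  obtain ⟨y, hy, hmem⟩ := h𝓑 C₀ (mem_maximizers.1 h₀).1 C₁ (mem_maximizers.1 h₁).1 x hx₀
  have hyC₀ : y ∉ C₀ := (Finset.mem_sdiff.1 hy).2
  refine ⟨C₀, h₀, x, (Finset.mem_sdiff.1 hx₀).1, y, hyC₀,
    (mem_maximizers_iff_of_mem h₀).2 ⟨hmem, ?_⟩⟩
  have hxy : g x ≤ g y := hmin y (Finset.mem_symmDiff.2 (Or.inr (Finset.mem_sdiff.1 hy)))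
  simp only [sum_insert_erase (Finset.mem_sdiff.1 hx₀).1 hyC₀]
  linarith

lemma comp_indVec_eq_sum (l : StrongDual ℝ (Fin n → ℝ)) :
    l ∘ indVec n = fun B => ∑ i ∈ B, l (indVec n {i}) := by
  ext B
  rw [Function.comp_apply, indVec_eq_sum, map_sum]

lemma IsBases.edge_direction (h𝓑 : IsBases 𝓑) {F : Set (Fin n → ℝ)}
    (hF : IsEdge (polytope 𝓑) F) :
    ∃ i j : Fin n,
      (affineSpan ℝ F).direction = Submodule.span ℝ {indVec n {i} - indVec n {j}} := by
  obtain ⟨hexp, hdim⟩ := hF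
  have hFne : F.Nonempty := by
    rw [Set.nonempty_iff_ne_empty]
    rintro rfl
    rw [polyDim, AffineSubspace.span_empty, AffineSubspace.direction_bot, finrank_bot] at hdim
    exact zero_ne_one hdim
  obtain ⟨l, hl⟩ := hexp hFne
  change F = l.toExposed (polytope 𝓑) at hl
  subst hl
  have hdir := direction_toExposed_polytope l 𝓑
  rw [polyDim, hdir] at hdim
  obtain ⟨C₀, h₀, C₁, h₁, hne⟩ : ∃ C₀ ∈ maximizers (l ∘ indVec n) 𝓑,
      ∃ C₁ ∈ maximizers (l ∘ indVec n) 𝓑, C₀ ≠ C₁ := by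
    by_contra! hsub
    have : (indVec n '' maximizers (l ∘ indVec n) 𝓑).Subsingleton :=
      Set.Subsingleton.image hsub _
    rw [(vectorSpan_eq_bot_iff_subsingleton ℝ).2 this, finrank_bot] at hdim
    exact zero_ne_one hdim
  rw [comp_indVec_eq_sum] at hdir hdim h₀ h₁
  obtain ⟨D, hD, x, hx, y, hy, hD'⟩ := h𝓑.exists_exchange_mem_maximizers _ h₀ h₁ hne
  have hmem : indVec n {y} - indVec n {x} ∈
      (affineSpan ℝ (l.toExposed (polytope 𝓑))).direction := by
    rw [hdir, ← indVec_insert_erase_sub hx hy]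
    exact vsub_mem_vectorSpan ℝ (Set.mem_image_of_mem _ hD') (Set.mem_image_of_mem _ hD)
  have hne' : indVec n {y} - indVec n {x} ≠ 0 := by
    rw [← indVec_insert_erase_sub hx hy, sub_ne_zero]
    exact fun h => hy (indVec_injective h ▸ Finset.mem_insert_self y _)
  refine ⟨y, x, (Submodule.eq_of_le_of_finrank_eq ?_ ?_).symm⟩
  · exact Submodule.span_le.2 (Set.singleton_subset_iff.2 hmem)
  · rw [finrank_span_singleton hne', ← hdim, hdir]

end Forward

section FinsetFamilies

variable {α : Type*} [DecidableEq α] {r : ℕ}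

lemma card_inter_lt_of_ne {A B : Finset α} (hA : #A = r) (hB : #B = r) (hne : A ≠ B) :
    #(A ∩ B) < r := by
  refine lt_of_le_of_ne (hA ▸ Finset.card_le_card Finset.inter_subset_left) fun h => hne ?_
  have hAB : A ⊆ B := Finset.inter_eq_left.1 <|
    Finset.eq_of_subset_of_card_le Finset.inter_subset_left (by omega)
  exact Finset.eq_of_subset_of_card_le hAB (by omega)

lemma maximizers_card_inter_eq_filter_subset {𝒯 : Finset (Finset α)} {U : Finset α}
    (hcard : ∀ B ∈ 𝒯, #B = r) {B₀ : Finset α} (hB₀ : B₀ ∈ 𝒯) (hB₀U : B₀ ⊆ U) :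
    maximizers (fun B => (#(U ∩ B) : ℝ)) 𝒯 = {B ∈ 𝒯 | B ⊆ U} := by
  have hle : ∀ B ∈ 𝒯, #(U ∩ B) ≤ r := fun B hB =>
    hcard B hB ▸ Finset.card_le_card Finset.inter_subset_right
  have hB₀max : B₀ ∈ maximizers (fun B => (#(U ∩ B) : ℝ)) 𝒯 := by
    refine mem_maximizers.2 ⟨hB₀, fun B hB => ?_⟩
    rw [Finset.inter_eq_right.2 hB₀U, hcard B₀ hB₀]
    exact_mod_cast hle B hB
  ext B
  rw [mem_maximizers_iff_of_mem hB₀max, Finset.mem_filter, Finset.inter_eq_right.2 hB₀U,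
    hcard B₀ hB₀, Nat.cast_le]
  refine and_congr_right fun hB => ⟨fun h => ?_, fun h => ?_⟩
  · rw [← Finset.inter_eq_right]
    exact Finset.eq_of_subset_of_card_le Finset.inter_subset_right (hcard B hB ▸ h)
  · rw [Finset.inter_eq_right.2 h, hcard B hB]

/-- Penalizing `b` by the gap `r - #(B₁ ∩ Bs)` makes the sets avoiding `b` that are closest to
`B₁` tie with `B₁`. -/
lemma maximizers_card_inter_sub_eq_insert {𝒯 : Finset (Finset α)} (hcard : ∀ B ∈ 𝒯, #B = r)
    {B₁ Bs : Finset α} {b : α} (hB₁ : B₁ ∈ 𝒯) (hb : b ∈ B₁)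
    (hBs : Bs ∈ maximizers (fun B => (#(B₁ ∩ B) : ℝ)) {B ∈ 𝒯 | b ∉ B}) :
    maximizers (fun B => (#(B₁ ∩ B) : ℝ) - (r - #(B₁ ∩ Bs)) * if b ∈ B then 1 else 0) 𝒯 =
      insert B₁ (maximizers (fun B => (#(B₁ ∩ B) : ℝ)) {B ∈ 𝒯 | b ∉ B}) := by
  set M : ℝ := (#(B₁ ∩ Bs) : ℝ)
  set ψ : Finset α → ℝ := fun B => #(B₁ ∩ B) - (r - M) * if b ∈ B then 1 else 0
  have hψB₁ : ψ B₁ = M := by simp [ψ, hb, hcard B₁ hB₁]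
  have hψ_lt : ∀ B ∈ 𝒯, b ∈ B → B ≠ B₁ → ψ B < M := by
    intro B hB hbB hne
    have : (#(B₁ ∩ B) : ℝ) + 1 ≤ r := by
      exact_mod_cast card_inter_lt_of_ne (hcard B₁ hB₁) (hcard B hB) hne.symm
    simp only [ψ, if_pos hbB]
    linarith
  have hψ_eq : ∀ B, b ∉ B → ψ B = #(B₁ ∩ B) := fun B hbB => by simp [ψ, hbB]
  have hB₁max : B₁ ∈ maximizers ψ 𝒯 := by
    refine mem_maximizers.2 ⟨hB₁, fun B hB => hψB₁ ▸ ?_⟩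
    by_cases hbB : b ∈ B
    · rcases eq_or_ne B B₁ with rfl | hne
      · exact hψB₁.le
      · exact (hψ_lt B hB hbB hne).le
    · exact hψ_eq B hbB ▸ (mem_maximizers.1 hBs).2 B (Finset.mem_filter.2 ⟨hB, hbB⟩)
  ext B
  rw [mem_maximizers_iff_of_mem hB₁max, Finset.mem_insert, mem_maximizers_iff_of_mem hBs,
    Finset.mem_filter, hψB₁]
  by_cases hbB : b ∈ B
  · rcases eq_or_ne B B₁ with rfl | hne
    · simp [hB₁, hψB₁]
    · simp only [hne, hbB, not_true_eq_false, and_false, false_and, or_self, iff_false]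
      exact fun ⟨hB, hle⟩ => (hψ_lt B hB hbB hne).not_ge hle
  · simp [M, hψ_eq B hbB, hbB, (ne_of_mem_of_not_mem' hb hbB).symm]

lemma maximizers_card_inter_add_card_inter_eq_pair {𝒢 : Finset (Finset α)}
    (hcard : ∀ B ∈ 𝒢, #B = r) {B₁ Bs : Finset α} (hB₁ : #B₁ = r)
    (hBs : Bs ∈ maximizers (fun B => (#(B₁ ∩ B) : ℝ)) 𝒢) :
    maximizers (fun B => (#(B₁ ∩ B) : ℝ) + #(Bs ∩ B))
        (insert B₁ (maximizers (fun B => (#(B₁ ∩ B) : ℝ)) 𝒢)) = {B₁, Bs} := by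
  set A := maximizers (fun B => (#(B₁ ∩ B) : ℝ)) 𝒢
  set χ : Finset α → ℝ := fun B => #(B₁ ∩ B) + #(Bs ∩ B)
  have hBs𝒢 : Bs ∈ 𝒢 := (mem_maximizers.1 hBs).1
  have hχB₁ : χ B₁ = #(B₁ ∩ Bs) + r := by simp [χ, hB₁, Finset.inter_comm, add_comm]
  have hχ : ∀ B ∈ A, χ B = #(B₁ ∩ Bs) + #(Bs ∩ B) := fun B hB => by
    simp only [χ, le_antisymm ((mem_maximizers.1 hBs).2 B (mem_maximizers.1 hB).1)
      ((mem_maximizers.1 hB).2 Bs hBs𝒢)]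
  have hχ_le : ∀ B ∈ A, χ B ≤ χ B₁ := fun B hB => by
    have : (#(Bs ∩ B) : ℝ) ≤ r :=
      by exact_mod_cast hcard Bs hBs𝒢 ▸ Finset.card_le_card Finset.inter_subset_left
    rw [hχ B hB, hχB₁]
    linarith
  have hχ_lt : ∀ B ∈ A, B ≠ Bs → χ B < χ B₁ := fun B hB hne => by
    have : (#(Bs ∩ B) : ℝ) + 1 ≤ r := by
      exact_mod_cast card_inter_lt_of_ne (hcard Bs hBs𝒢) (hcard B (mem_maximizers.1 hB).1)
        hne.symm
    rw [hχ B hB, hχB₁]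
    linarith
  have hB₁max : B₁ ∈ maximizers χ (insert B₁ A) := by
    refine mem_maximizers.2 ⟨Finset.mem_insert_self _ _, fun B hB => ?_⟩
    rcases Finset.mem_insert.1 hB with rfl | hB
    · exact le_rfl
    · exact hχ_le B hB
  ext B
  rw [mem_maximizers_iff_of_mem hB₁max, Finset.mem_insert, Finset.mem_insert,
    Finset.mem_singleton]
  refine ⟨fun ⟨hB, hle⟩ => hB.imp_right fun hB => ?_, fun h => ⟨?_, ?_⟩⟩
  · by_contra hne
    exact (hχ_lt B hB hne).not_ge hle
  · exact h.imp_right (by rintro rfl; exact hBs)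
  · rcases h with rfl | rfl
    · exact le_rfl
    · rw [hχ B hBs, hχB₁, Finset.inter_self, hcard B hBs𝒢]

end FinsetFamilies

section Backward

variable {n r : ℕ} {𝓑 : Finset (Finset (Fin n))}

/-- The weights `w₀, w₁, w₂` single out, lexicographically: the members of `𝓑` inside
`B₁ ∪ B₂`; among those, `B₁` and the members avoiding `b` closest to `B₁`; among those, `B₁` and
one fixed such member `Bs`. -/
lemma exists_maximizers_dotProduct_eq_pair (hcard : ∀ B ∈ 𝓑, #B = r) {B₁ B₂ : Finset (Fin n)}
    (hB₁ : B₁ ∈ 𝓑) (hB₂ : B₂ ∈ 𝓑) {b : Fin n} (hb : b ∈ B₁ \ B₂) :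
    ∃ Bs ∈ 𝓑, b ∉ Bs ∧ Bs ⊆ B₁ ∪ B₂ ∧
      ∃ w : Fin n → ℝ, maximizers (fun B => w ⬝ᵥ indVec n B) 𝓑 = {B₁, Bs} := by
  obtain ⟨hbB₁, hbB₂⟩ := Finset.mem_sdiff.1 hb
  set 𝓕 := {B ∈ 𝓑 | B ⊆ B₁ ∪ B₂}
  have hcard𝓕 : ∀ B ∈ 𝓕, #B = r := fun B hB => hcard B (Finset.mem_filter.1 hB).1
  have hB₁𝓕 : B₁ ∈ 𝓕 := Finset.mem_filter.2 ⟨hB₁, Finset.subset_union_left⟩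
  have hB₂𝓖 : B₂ ∈ {B ∈ 𝓕 | b ∉ B} :=
    Finset.mem_filter.2 ⟨Finset.mem_filter.2 ⟨hB₂, Finset.subset_union_right⟩, hbB₂⟩
  obtain ⟨Bs, hBs⟩ := exists_mem_maximizers (fun B => (#(B₁ ∩ B) : ℝ)) ⟨B₂, hB₂𝓖⟩
  obtain ⟨hBs𝓕, hbBs⟩ := Finset.mem_filter.1 (mem_maximizers.1 hBs).1
  set w₀ := indVec n (B₁ ∪ B₂)
  set w₁ := indVec n B₁ - ((r : ℝ) - #(B₁ ∩ Bs)) • indVec n {b}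
  set w₂ := indVec n B₁ + indVec n Bs
  have h₀ : maximizers (fun B => w₀ ⬝ᵥ indVec n B) 𝓑 = 𝓕 := by
    simp only [w₀, indVec_dotProduct_indVec]
    exact maximizers_card_inter_eq_filter_subset hcard hB₁ Finset.subset_union_left
  have h₁ : maximizers (fun B => w₁ ⬝ᵥ indVec n B) 𝓕 =
      insert B₁ (maximizers (fun B => (#(B₁ ∩ B) : ℝ)) {B ∈ 𝓕 | b ∉ B}) := by
    simp only [w₁, sub_dotProduct, smul_dotProduct, indVec_singleton_dotProduct_indVec,
      smul_eq_mul]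
    simp only [indVec_dotProduct_indVec]
    exact maximizers_card_inter_sub_eq_insert hcard𝓕 hB₁𝓕 hbB₁ hBs
  have h₂ : maximizers (fun B => w₂ ⬝ᵥ indVec n B)
      (insert B₁ (maximizers (fun B => (#(B₁ ∩ B) : ℝ)) {B ∈ 𝓕 | b ∉ B})) = {B₁, Bs} := by
    simp only [w₂, add_dotProduct, indVec_dotProduct_indVec]
    exact maximizers_card_inter_add_card_inter_eq_pair
      (fun B hB => hcard𝓕 B (Finset.mem_filter.1 hB).1) (hcard B₁ hB₁) hBs
  obtain ⟨N₁, hN₁⟩ := exists_maximizers_mul_add_eq (fun B => w₀ ⬝ᵥ indVec n B)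
    (fun B => w₁ ⬝ᵥ indVec n B) 𝓑
  obtain ⟨N₂, hN₂⟩ := exists_maximizers_mul_add_eq
    (fun B => N₁ * w₀ ⬝ᵥ indVec n B + w₁ ⬝ᵥ indVec n B) (fun B => w₂ ⬝ᵥ indVec n B) 𝓑
  refine ⟨Bs, (Finset.mem_filter.1 hBs𝓕).1, hbBs, (Finset.mem_filter.1 hBs𝓕).2,
    N₂ • (N₁ • w₀ + w₁) + w₂, ?_⟩
  simp only [add_dotProduct, smul_dotProduct, smul_eq_mul]
  rw [hN₂, hN₁, h₀, h₁, h₂]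

lemma isEdge_toExposed_of_maximizers_eq_pair (l : StrongDual ℝ (Fin n → ℝ))
    {B C : Finset (Fin n)} (h : maximizers (l ∘ indVec n) 𝓑 = {B, C}) (hne : B ≠ C) :
    IsEdge (polytope 𝓑) (l.toExposed (polytope 𝓑)) ∧
      (affineSpan ℝ (l.toExposed (polytope 𝓑))).direction =
        Submodule.span ℝ {indVec n B - indVec n C} := by
  have hdir : (affineSpan ℝ (l.toExposed (polytope 𝓑))).direction =
      Submodule.span ℝ {indVec n B - indVec n C} := by
    rw [direction_toExposed_polytope, h, Finset.coe_pair, Set.image_pair, vectorSpan_pair,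
      vsub_eq_sub]
  refine ⟨⟨ContinuousLinearMap.toExposed.isExposed, ?_⟩, hdir⟩
  rw [polyDim, hdir, finrank_span_singleton (sub_ne_zero.2 (indVec_injective.ne hne))]

lemma exists_eq_insert_erase_of_indVec_sub_mem_span {B C : Finset (Fin n)} {b i j : Fin n}
    (hb : b ∈ B \ C)
    (h : indVec n B - indVec n C ∈ Submodule.span ℝ {indVec n {i} - indVec n {j}}) :
    ∃ c ∈ C \ B, C = insert c (B.erase b) := by
  obtain ⟨hbB, hbC⟩ := Finset.mem_sdiff.1 hb
  obtain ⟨μ, hμ⟩ := Submodule.mem_span_singleton.1 h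
  obtain ⟨c, hcb, hBC⟩ :
      ∃ c, c ≠ b ∧ indVec n B - indVec n C = indVec n {b} - indVec n {c} := by
    have hμb : μ * ((if b = i then 1 else 0) - (if b = j then 1 else 0)) = 1 := by
      simpa [indVec, hbB, hbC] using congrFun hμ b
    rcases eq_or_ne b i with rfl | hi <;> rcases eq_or_ne b j with rfl | hj
    · simp at hμb
    · simp only [if_true, hj, if_false, sub_zero, mul_one] at hμb
      exact ⟨j, hj.symm, by rw [← hμ, hμb, one_smul]⟩
    · simp only [if_true, hi, if_false, zero_sub, mul_neg, mul_one, neg_eq_iff_eq_neg] at hμb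
      exact ⟨i, hi.symm, by rw [← hμ, hμb, neg_one_smul, neg_sub]⟩
    · simp [hi, hj] at hμb
  have hc : (if c ∈ B then (1 : ℝ) else 0) - (if c ∈ C then 1 else 0) = -1 := by
    simpa [indVec, hcb] using congrFun hBC c
  have hcC : c ∈ C ∧ c ∉ B := by
    by_cases hcB : c ∈ B <;> by_cases hcC : c ∈ C <;>
      simp only [hcB, hcC, if_true, if_false] at hc <;>
      first | exact ⟨hcC, hcB⟩ | norm_num at hc
  refine ⟨c, Finset.mem_sdiff.2 hcC, indVec_injective ?_⟩
  linear_combination -hBC - indVec_insert_erase_sub hbB hcC.2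

lemma isBases_of_edge_directions (hcard : ∀ B ∈ 𝓑, #B = r)
    (h : ∀ F : Set (Fin n → ℝ), IsEdge (polytope 𝓑) F →
      ∃ i j : Fin n,
        (affineSpan ℝ F).direction = Submodule.span ℝ {indVec n {i} - indVec n {j}}) :
    IsBases 𝓑 := by
  intro B₁ hB₁ B₂ hB₂ b hb
  obtain ⟨Bs, hBs, hbBs, hBsU, w, hw⟩ := exists_maximizers_dotProduct_eq_pair hcard hB₁ hB₂ hb
  have hbB₁ := (Finset.mem_sdiff.1 hb).1
  obtain ⟨hedge, hdir⟩ := isEdge_toExposed_of_maximizers_eq_pair (dotProductCLM w) hw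
    (ne_of_mem_of_not_mem' hbB₁ hbBs)
  obtain ⟨i, j, hij⟩ := h _ hedge
  have hmem := Submodule.mem_span_singleton_self (R := ℝ) (indVec n B₁ - indVec n Bs)
  rw [← hdir, hij] at hmem
  obtain ⟨c, hc, rfl⟩ :=
    exists_eq_insert_erase_of_indVec_sub_mem_span (Finset.mem_sdiff.2 ⟨hbB₁, hbBs⟩) hmem
  obtain ⟨hcBs, hcB₁⟩ := Finset.mem_sdiff.1 hc
  refine ⟨c, Finset.mem_sdiff.2 ⟨?_, hcB₁⟩, hBs⟩
  exact (Finset.mem_union.1 (hBsU hcBs)).resolve_left hcB₁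

end Backward

/-- **Theorem (Gelfand–Serganova).** A collection `𝓑` of `r`-element subsets of `[n]`
is the collection of bases of a matroid iff every edge of `Q(𝓑)` is a parallel
translate of `e_i - e_j` for some `i, j ∈ [n]`. -/
theorem statement_0 (n r : ℕ) (𝓑 : Finset (Finset (Fin n)))
    (hcard : ∀ B ∈ 𝓑, B.card = r) :
    IsBases 𝓑 ↔
      ∀ F : Set (Fin n → ℝ), IsEdge (polytope 𝓑) F →
        ∃ i j : Fin n,
          (affineSpan ℝ F).direction = Submodule.span ℝ {indVec n {i} - indVec n {j}} :=
  ⟨fun h𝓑 _ hF => h𝓑.edge_direction hF, isBases_of_edge_directions hcard⟩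
end

section
/- Let M_1 be the Schubert matroid on [6] of rank 3 whose bases are the sets {a,b,c} with a < b < c, a ≤ 2, b ≤ 4, c ≤ 6, and let σ be the permutation 345612 acting on [6] (so σ(1)=3, σ(2)=4, σ(3)=5, σ(4)=6, σ(5)=1, σ(6)=2). Set M_2 = σM_1 and M_3 = σ²M_1. Then {Q(M_1), Q(M_2), Q(M_3)} is a subdivision of the hypersimplex Q(U_{3,6}): their union is Q(U_{3,6}) and pairwise intersections are proper faces of each. -/
/-!
Write `s_b(x) = x_{2b} + x_{2b+1}` for the sums over the pairs `{0,1}, {2,3}, {4,5}`. The bases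
of `σⁱM₁` are the `3`-sets meeting pair `i` and containing at most one element of pair `i - 1`,
and `Q(σⁱM₁) = {x ∈ Δ(3,6) | s_i(x) ≥ 1, s_{i-1}(x) ≤ 1}`. This holds for any polytope cut out
of the cube by `∑ xᵢ = k` and integral bounds on the sums over the blocks of a partition: at a
point with a fractional coordinate there are two fractional coordinates `p ≠ q`, either in one
block or in blocks whose sums are fractional, and the point moves along `e_p - e_q` in both
directions, so every extreme point is a `0/1` vector; by Krein–Milman the polytope is the convex
hull of those.

Since `s_0 + s_1 + s_2 = 3`, some `i` has `s_i ≥ 1 ≥ s_{i-1}`, so the three pieces cover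
`Δ(3,6)`; consecutive pieces `i, i + 1` meet in the set where `s_i = 1`, which is exposed in both
by `s_i`, and each piece has a vertex outside the other.
-/
open Finset
open scoped Pointwise

/-- A subdivision of a polytope `P` into polytopes `Ps i`: their union is `P`,
their vertices are vertices of `P`, and each pairwise intersection is a proper
(exposed) face of both pieces. -/
def IsSubdivision {n m : ℕ} (P : Set (Fin n → ℝ)) (Ps : Fin m → Set (Fin n → ℝ)) : Prop :=
  (⋃ i, Ps i) = P ∧
  (∀ i, Set.extremePoints ℝ (Ps i) ⊆ Set.extremePoints ℝ P) ∧
  ∀ i j, i ≠ j →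
    IsExposed ℝ (Ps i) (Ps i ∩ Ps j) ∧ IsExposed ℝ (Ps j) (Ps i ∩ Ps j) ∧
    Ps i ∩ Ps j ≠ Ps i ∧ Ps i ∩ Ps j ≠ Ps j

/-- A matroid subdivision of the matroid `𝓑` into the matroids `𝓜 i`. -/
def IsMatroidSubdivision {n m : ℕ} (𝓑 : Finset (Finset (Fin n)))
    (𝓜 : Fin m → Finset (Finset (Fin n))) : Prop :=
  IsBases 𝓑 ∧ (∀ i, IsBases (𝓜 i)) ∧ IsSubdivision (polytope 𝓑) fun i => polytope (𝓜 i)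

open Classical in
/-- For `A ⊆ [m]`, the matroid `M_A` whose polytope is `⋂_{a ∈ A} Q(M_a)`:
its bases are the bases of `M` whose indicator vector lies in every `Q(M_a)`, `a ∈ A`.
For `A = ∅` this is `M` itself. -/
noncomputable def interMatroid {n m : ℕ} (𝓑 : Finset (Finset (Fin n)))
    (𝓜 : Fin m → Finset (Finset (Fin n))) (A : Finset (Fin m)) : Finset (Finset (Fin n)) :=
  𝓑.filter fun B => ∀ a ∈ A, indVec n B ∈ polytope (𝓜 a)

/-- `f` is a valuation under matroid subdivisions:
`∑_{A ⊆ [m]} (-1)^{|A|} f(M_A) = 0` for every matroid subdivision. -/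
def IsValuation {n : ℕ} {G : Type*} [AddCommGroup G] (f : Finset (Finset (Fin n)) → G) : Prop :=
  ∀ (m : ℕ) (𝓑 : Finset (Finset (Fin n))) (𝓜 : Fin m → Finset (Finset (Fin n))),
    IsMatroidSubdivision 𝓑 𝓜 →
    ∑ A : Finset (Fin m), (-1 : ℤ) ^ A.card • f (interMatroid 𝓑 𝓜 A) = 0

open Classical in
/-- The Schubert matroid `SM₆(2,4,6)` on `[6]` (0-indexed: bases `{a,b,c}` with
`a < b < c`, `a ≤ 1`, `b ≤ 3`). -/
noncomputable def SchM1 : Finset (Finset (Fin 6)) :=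
  (Finset.powersetCard 3 Finset.univ).filter fun B =>
    ∃ a b c : Fin 6, a < b ∧ b < c ∧ B = {a, b, c} ∧ (a : ℕ) ≤ 1 ∧ (b : ℕ) ≤ 3

/-- The permutation `345612` of `[6]`, i.e. `i ↦ i + 2 (mod 6)` in `0`-indexed form. -/
def sigma6 : Fin 6 → Fin 6 := fun i => i + 2

noncomputable def SchM2 : Finset (Finset (Fin 6)) := SchM1.image fun B => B.image sigma6

noncomputable def SchM3 : Finset (Finset (Fin 6)) := SchM2.image fun B => B.image sigma6


open Filter Topology

lemma exists_nat_sum_mem_Ioo {ι : Type*} [DecidableEq ι] {s : Finset ι} {x : ι → ℝ} {i : ι}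
    (hi : i ∈ s) (hxi : x i ∈ Set.Ioo 0 1) (hs : ∀ j ∈ s, j ≠ i → x j = 0 ∨ x j = 1) :
    ∃ m : ℕ, ∑ j ∈ s, x j ∈ Set.Ioo (m : ℝ) (m + 1) := by
  have hrest : ∑ j ∈ s.erase i, x j = #((s.erase i).filter (x · = 1)) := by
    rw [Finset.natCast_card_filter]
    refine Finset.sum_congr rfl fun j hj => ?_
    rcases hs j (Finset.mem_of_mem_erase hj) (Finset.ne_of_mem_erase hj) with h | h <;> simp [h]
  refine ⟨#((s.erase i).filter (x · = 1)), ?_⟩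
  rw [← Finset.add_sum_erase s x hi, hrest]
  constructor <;> linarith [hxi.1, hxi.2]

lemma mem_Ioo_of_mem_Icc_of_mem_Ioo {y : ℝ} {l u m : ℕ} (h : y ∈ Set.Icc (l : ℝ) u)
    (hm : y ∈ Set.Ioo (m : ℝ) (m + 1)) : y ∈ Set.Ioo (l : ℝ) u := by
  have hl : l < m + 1 := by exact_mod_cast h.1.trans_lt hm.2
  have hu : m < u := by exact_mod_cast hm.1.trans_le h.2
  have hl' : (l : ℝ) ≤ m := by exact_mod_cast Nat.lt_succ_iff.1 hl
  have hu' : (m : ℝ) + 1 ≤ u := by exact_mod_cast hu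
  exact ⟨hl'.trans_lt hm.1, hm.2.trans_le hu'⟩

lemma eventually_add_mul_mem_Icc {a b c v : ℝ} (hc : c ∈ Set.Icc a b)
    (hv : v = 0 ∨ c ∈ Set.Ioo a b) : ∀ᶠ t in 𝓝 (0 : ℝ), c + t * v ∈ Set.Icc a b := by
  rcases hv with rfl | hc'
  · simpa using hc
  · have hlim : Tendsto (fun t : ℝ => c + t * v) (𝓝 0) (𝓝 c) :=
      (continuous_const.add (continuous_id.mul continuous_const)).tendsto' 0 c (by simp)
    exact (hlim.eventually (Ioo_mem_nhds hc'.1 hc'.2)).mono fun _ h => Set.Ioo_subset_Icc_self h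

lemma notMem_extremePoints_of_eventually_add_smul_mem {E : Type*} [AddCommGroup E] [Module ℝ E]
    {A : Set E} {x d : E} (hd : d ≠ 0) (h : ∀ᶠ t in 𝓝 (0 : ℝ), x + t • d ∈ A) :
    x ∉ A.extremePoints ℝ := by
  intro hx
  have hneg : ∀ᶠ t in 𝓝 (0 : ℝ), x + (-t) • d ∈ A :=
    (continuous_neg.tendsto' (0 : ℝ) 0 neg_zero).eventually h
  obtain ⟨t, ⟨h₁, h₂⟩, ht⟩ :=
    ((h.and hneg).filter_mono nhdsWithin_le_nhds |>.and self_mem_nhdsWithin).exists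
      (f := 𝓝[>] (0 : ℝ))
  have hseg : x ∈ openSegment ℝ (x + t • d) (x + (-t) • d) :=
    ⟨1 / 2, 1 / 2, by norm_num, by norm_num, by norm_num, by module⟩
  have := hx.2 h₁ h₂ hseg
  simp [ne_of_gt ht, hd] at this

lemma isExposed_sep_eq_of_le {E : Type*} [AddCommGroup E] [Module ℝ E] [TopologicalSpace E]
    {A : Set E} {f : StrongDual ℝ E} {c : ℝ} (h : ∀ y ∈ A, f y ≤ c) :
    IsExposed ℝ A {x ∈ A | f x = c} := by
  rintro ⟨x₀, hx₀A, hx₀⟩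
  refine ⟨f, Set.ext fun x => ⟨fun ⟨hxA, hx⟩ => ⟨hxA, fun y hy => hx ▸ h y hy⟩,
    fun ⟨hxA, hx⟩ => ⟨hxA, le_antisymm (h x hxA) (hx₀ ▸ hx x₀ hx₀A)⟩⟩⟩

lemma isExposed_sep_eq_of_ge {E : Type*} [AddCommGroup E] [Module ℝ E] [TopologicalSpace E]
    [IsTopologicalAddGroup E] {A : Set E} {f : StrongDual ℝ E} {c : ℝ} (h : ∀ y ∈ A, c ≤ f y) :
    IsExposed ℝ A {x ∈ A | f x = c} := by
  simpa using isExposed_sep_eq_of_le (f := -f) (c := -c) fun y hy => neg_le_neg (h y hy)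

section BlockPolytope

variable {n : ℕ} {β : Type*} [DecidableEq β]

def coordSum (s : Finset (Fin n)) : (Fin n → ℝ) →L[ℝ] ℝ :=
  ∑ i ∈ s, ContinuousLinearMap.proj i

@[simp]
lemma coordSum_apply (s : Finset (Fin n)) (x : Fin n → ℝ) : coordSum s x = ∑ i ∈ s, x i := by
  simp [coordSum]

def unitCube (n : ℕ) : Set (Fin n → ℝ) := Set.univ.pi fun _ => Set.Icc 0 1

def hypersimplex (n k : ℕ) : Set (Fin n → ℝ) := unitCube n ∩ coordSum univ ⁻¹' {(k : ℝ)}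

def blockSum (blk : Fin n → β) (b : β) : (Fin n → ℝ) →L[ℝ] ℝ :=
  coordSum (univ.filter (blk · = b))

def blockPolytope (blk : Fin n → β) (k : ℕ) (l u : β → ℕ) : Set (Fin n → ℝ) :=
  hypersimplex n k ∩ ⋂ b, blockSum blk b ⁻¹' Set.Icc (l b : ℝ) (u b)

def blockBases [Fintype β] (blk : Fin n → β) (k : ℕ) (l u : β → ℕ) :
    Finset (Finset (Fin n)) :=
  (powersetCard k univ).filter fun B =>
    ∀ b, l b ≤ #(B.filter (blk · = b)) ∧ #(B.filter (blk · = b)) ≤ u b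

variable {blk : Fin n → β} {k : ℕ} {l u : β → ℕ} {x : Fin n → ℝ}

lemma blockBases_subset_powersetCard [Fintype β] : blockBases blk k l u ⊆ powersetCard k univ :=
  Finset.filter_subset _ _

lemma sum_indVec (s B : Finset (Fin n)) : ∑ i ∈ s, indVec n B i = #(s ∩ B) := by
  simp [indVec, Finset.sum_ite_mem]

lemma indVec_mem_unitCube (B : Finset (Fin n)) : indVec n B ∈ unitCube n := by
  intro i _
  by_cases h : i ∈ B <;> simp [indVec, h]

lemma indVec_mem_blockPolytope_iff [Fintype β] (B : Finset (Fin n)) :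
    indVec n B ∈ blockPolytope blk k l u ↔ B ∈ blockBases blk k l u := by
  simp [blockPolytope, hypersimplex, blockBases, blockSum, sum_indVec, indVec_mem_unitCube,
    Finset.filter_inter]

lemma sum_blockSum [Fintype β] : ∑ b, blockSum blk b x = ∑ i, x i := by
  simpa [blockSum] using Finset.sum_fiberwise univ blk x

lemma blockSum_mem_Icc (hx : x ∈ unitCube n) (b : β) :
    blockSum blk b x ∈ Set.Icc 0 (#(univ.filter (blk · = b)) : ℝ) := by
  have hx' : ∀ i, x i ∈ Set.Icc 0 1 := fun i => hx i (Set.mem_univ i)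
  constructor
  · simpa [blockSum] using Finset.sum_nonneg fun i _ => (hx' i).1
  · simpa [blockSum] using Finset.sum_le_card_nsmul _ _ 1 fun i _ => (hx' i).2

lemma convex_blockPolytope : Convex ℝ (blockPolytope blk k l u) :=
  ((convex_pi fun _ _ => convex_Icc 0 1).inter
    ((convex_singleton _).linear_preimage (coordSum univ).toLinearMap)).inter
    (convex_iInter fun b => (convex_Icc _ _).linear_preimage (blockSum blk b).toLinearMap)

lemma isCompact_blockPolytope : IsCompact (blockPolytope blk k l u) :=
  ((isCompact_univ_pi fun _ => isCompact_Icc).inter_right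
    (isClosed_singleton.preimage (coordSum univ).continuous)).inter_right
    (isClosed_iInter fun b => isClosed_Icc.preimage (blockSum blk b).continuous)

lemma eq_zero_or_eq_one_of_notMem_Ioo (hx : x ∈ unitCube n) {i : Fin n}
    (hi : x i ∉ Set.Ioo 0 1) : x i = 0 ∨ x i = 1 := by
  obtain ⟨h₀, h₁⟩ := hx i (Set.mem_univ i)
  simp only [Set.mem_Ioo, not_and_or, not_lt] at hi
  rcases hi with h | h
  · exact Or.inl (le_antisymm h h₀)
  · exact Or.inr (le_antisymm h₁ h)

lemma exists_ne_mem_Ioo (hx : x ∈ hypersimplex n k) {i : Fin n} (hi : x i ∈ Set.Ioo 0 1) :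
    ∃ j ≠ i, x j ∈ Set.Ioo 0 1 := by
  by_contra! h
  obtain ⟨m, hm⟩ := exists_nat_sum_mem_Ioo (Finset.mem_univ i) hi
    fun j _ hj => eq_zero_or_eq_one_of_notMem_Ioo hx.1 (h j hj)
  have hk : ∑ j, x j = k := by simpa using hx.2
  rw [hk] at hm
  have h₁ : m < k := by exact_mod_cast hm.1
  have h₂ : k < m + 1 := by exact_mod_cast hm.2
  omega

lemma blockSum_mem_Ioo (hx : x ∈ blockPolytope blk k l u) {i : Fin n}
    (hi : x i ∈ Set.Ioo 0 1) (halone : ∀ j ≠ i, blk j = blk i → x j ∉ Set.Ioo 0 1) :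
    blockSum blk (blk i) x ∈ Set.Ioo (l (blk i) : ℝ) (u (blk i)) := by
  obtain ⟨m, hm⟩ := exists_nat_sum_mem_Ioo (s := univ.filter (blk · = blk i))
    (by simp) hi fun j hj hji =>
      eq_zero_or_eq_one_of_notMem_Ioo hx.1.1 (halone j hji (Finset.mem_filter.1 hj).2)
  exact mem_Ioo_of_mem_Icc_of_mem_Ioo (Set.mem_iInter.1 hx.2 (blk i)) (by simpa [blockSum] using hm)

lemma exists_movable_pair (hx : x ∈ blockPolytope blk k l u) {i : Fin n}
    (hi : x i ∈ Set.Ioo 0 1) :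
    ∃ p q, p ≠ q ∧ x p ∈ Set.Ioo 0 1 ∧ x q ∈ Set.Ioo 0 1 ∧
      (blk p = blk q ∨ blockSum blk (blk p) x ∈ Set.Ioo (l (blk p) : ℝ) (u (blk p)) ∧
        blockSum blk (blk q) x ∈ Set.Ioo (l (blk q) : ℝ) (u (blk q))) := by
  have mate_or_alone : ∀ p, (∃ q ≠ p, blk q = blk p ∧ x q ∈ Set.Ioo 0 1) ∨
      ∀ q ≠ p, blk q = blk p → x q ∉ Set.Ioo 0 1 := by
    intro p
    by_cases h : ∃ q ≠ p, blk q = blk p ∧ x q ∈ Set.Ioo 0 1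
    · exact Or.inl h
    · push Not at h
      exact Or.inr h
  rcases mate_or_alone i with ⟨q, hqi, hq, hqx⟩ | hi_alone
  · exact ⟨i, q, hqi.symm, hi, hqx, Or.inl hq.symm⟩
  obtain ⟨j, hji, hj⟩ := exists_ne_mem_Ioo hx.1 hi
  rcases mate_or_alone j with ⟨q, hqj, hq, hqx⟩ | hj_alone
  · exact ⟨j, q, hqj.symm, hj, hqx, Or.inl hq.symm⟩
  exact ⟨i, j, hji.symm, hi, hj,
    Or.inr ⟨blockSum_mem_Ioo hx hi hi_alone, blockSum_mem_Ioo hx hj hj_alone⟩⟩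

lemma eventually_add_smul_mem_blockPolytope [Finite β] {d : Fin n → ℝ}
    (hx : x ∈ blockPolytope blk k l u) (hd_sum : ∑ i, d i = 0)
    (hd_cube : ∀ i, d i = 0 ∨ x i ∈ Set.Ioo 0 1)
    (hd_blk : ∀ b, blockSum blk b d = 0 ∨ blockSum blk b x ∈ Set.Ioo (l b : ℝ) (u b)) :
    ∀ᶠ t in 𝓝 (0 : ℝ), x + t • d ∈ blockPolytope blk k l u := by
  obtain ⟨⟨hcube, hsum⟩, hblk⟩ := hx
  simp only [unitCube, Set.mem_univ_pi, Set.mem_iInter, Set.mem_preimage] at hcube hblk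
  have hcube' := eventually_all.2 fun i => eventually_add_mul_mem_Icc (hcube i) (hd_cube i)
  have hblk' := eventually_all.2 fun b => eventually_add_mul_mem_Icc (hblk b) (hd_blk b)
  filter_upwards [hcube', hblk'] with t hct hbt
  refine ⟨⟨fun i _ => by simpa using hct i, ?_⟩, ?_⟩
  · simp_all [Finset.sum_add_distrib, ← Finset.mul_sum]
  · simpa using hbt

lemma eventually_add_smul_single_sub_single_mem [Finite β] (hx : x ∈ blockPolytope blk k l u)
    {p q : Fin n} (hp : x p ∈ Set.Ioo 0 1) (hq : x q ∈ Set.Ioo 0 1)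
    (hblk : blk p = blk q ∨ blockSum blk (blk p) x ∈ Set.Ioo (l (blk p) : ℝ) (u (blk p)) ∧
        blockSum blk (blk q) x ∈ Set.Ioo (l (blk q) : ℝ) (u (blk q))) :
    ∀ᶠ t in 𝓝 (0 : ℝ), x + t • (Pi.single p 1 - Pi.single q 1) ∈ blockPolytope blk k l u := by
  refine eventually_add_smul_mem_blockPolytope hx (by simp) (fun i => ?_) (fun b => ?_)
  · by_cases hip : i = p
    · exact Or.inr (hip ▸ hp)
    by_cases hiq : i = q
    · exact Or.inr (hiq ▸ hq)
    · simp [hip, hiq]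
  · have hd : blockSum blk b (Pi.single p 1 - Pi.single q 1) =
        (if blk p = b then 1 else 0) - (if blk q = b then 1 else 0) := by
      simp [blockSum, Finset.sum_sub_distrib, Pi.single_apply]
    rcases hblk with h | ⟨hp', hq'⟩
    · simp [hd, h]
    by_cases hbp : blk p = b
    · exact Or.inr (hbp ▸ hp')
    by_cases hbq : blk q = b
    · exact Or.inr (hbq ▸ hq')
    · simp [hd, hbp, hbq]

lemma eq_zero_or_eq_one_of_mem_extremePoints [Finite β]
    (hx : x ∈ (blockPolytope blk k l u).extremePoints ℝ) (i : Fin n) : x i = 0 ∨ x i = 1 := by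
  refine eq_zero_or_eq_one_of_notMem_Ioo hx.1.1.1 fun hi => ?_
  obtain ⟨p, q, hpq, hp, hq, hblk⟩ := exists_movable_pair hx.1 hi
  have hd : (Pi.single p 1 - Pi.single q 1 : Fin n → ℝ) ≠ 0 := fun h => by
    simpa [hpq] using congrFun h p
  exact notMem_extremePoints_of_eventually_add_smul_mem hd
    (eventually_add_smul_single_sub_single_mem hx.1 hp hq hblk) hx

lemma extremePoints_blockPolytope_subset [Fintype β] :
    (blockPolytope blk k l u).extremePoints ℝ ⊆ indVec n '' blockBases blk k l u := by
  intro x hx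
  have hx_eq : x = indVec n (univ.filter (x · = 1)) := funext fun i => by
    rcases eq_zero_or_eq_one_of_mem_extremePoints hx i with h | h <;> simp [indVec, h]
  refine ⟨_, ?_, hx_eq.symm⟩
  rw [Finset.mem_coe, ← indVec_mem_blockPolytope_iff, ← hx_eq]
  exact hx.1

theorem polytope_blockBases [Fintype β] :
    polytope (blockBases blk k l u) = blockPolytope blk k l u := by
  refine subset_antisymm (convexHull_min ?_ convex_blockPolytope) ?_
  · rintro _ ⟨B, hB, rfl⟩
    exact (indVec_mem_blockPolytope_iff B).2 hB
  calc blockPolytope blk k l u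
      = closure (convexHull ℝ ((blockPolytope blk k l u).extremePoints ℝ)) :=
        (closure_convexHull_extremePoints isCompact_blockPolytope convex_blockPolytope).symm
    _ ⊆ closure (polytope (blockBases blk k l u)) :=
        closure_mono (convexHull_mono extremePoints_blockPolytope_subset)
    _ = polytope (blockBases blk k l u) :=
        (((Set.toFinite _).image _).isCompact_convexHull ℝ).isClosed.closure_eq

end BlockPolytope

theorem polytope_powersetCard (n k : ℕ) :
    polytope (powersetCard k (univ : Finset (Fin n))) = hypersimplex n k := by
  have hbases : blockBases (fun _ : Fin n => ()) k 0 (fun _ => k) = powersetCard k univ :=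
    Finset.filter_true_of_mem fun B hB => by simp [(Finset.mem_powersetCard.1 hB).2]
  have hpoly : blockPolytope (fun _ : Fin n => ()) k 0 (fun _ => k) = hypersimplex n k := by
    refine Set.inter_eq_left.2 fun x hx => ?_
    have hsum : ∑ i, x i = k := by simpa using hx.2
    simp [blockSum, hsum]
  rw [← hbases, polytope_blockBases, hpoly]

lemma isBases_powersetCard (n k : ℕ) : IsBases (powersetCard k (univ : Finset (Fin n))) := by
  intro B₁ h₁ B₂ h₂ b₁ hb₁
  rw [Finset.mem_powersetCard] at h₁ h₂
  obtain ⟨b₂, hb₂⟩ : (B₂ \ B₁).Nonempty := by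
    rw [Finset.sdiff_nonempty]
    intro hsub
    have := Finset.eq_of_subset_of_card_le hsub (by omega)
    exact (Finset.mem_sdiff.1 hb₁).2 (this ▸ (Finset.mem_sdiff.1 hb₁).1)
  refine ⟨b₂, hb₂, Finset.mem_powersetCard.2 ⟨Finset.subset_univ _, ?_⟩⟩
  rw [Finset.mem_sdiff] at hb₁ hb₂
  rw [Finset.card_insert_of_notMem (fun h => hb₂.2 (Finset.mem_of_mem_erase h)),
    Finset.card_erase_of_mem hb₁.1, h₁.2]
  have := Finset.card_pos.2 ⟨b₁, hb₁.1⟩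
  omega

lemma extremePoints_polytope_subset {n k : ℕ} {𝓑 : Finset (Finset (Fin n))}
    (h𝓑 : 𝓑 ⊆ powersetCard k univ) :
    (polytope 𝓑).extremePoints ℝ ⊆ (hypersimplex n k).extremePoints ℝ := by
  intro y hy
  obtain ⟨B, hB, rfl⟩ := extremePoints_convexHull_subset hy
  have hsub : hypersimplex n k ⊆ unitCube n := Set.inter_subset_left
  refine inter_extremePoints_subset_extremePoints_of_subset hsub ⟨?_, ?_⟩
  · rw [← polytope_powersetCard]
    exact subset_convexHull ℝ _ ⟨B, h𝓑 hB, rfl⟩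
  · rw [unitCube, extremePoints_pi]
    intro i _
    by_cases h : i ∈ B <;> simp [indVec, h]

def blk6 : Fin 6 → Fin 3 := ![0, 0, 1, 1, 2, 2]

/-- For `{a < b < c}` (0-indexed), `a ≤ 1` says that `B` meets the pair `{0, 1}` and `b ≤ 3`
that it has at most one element in `{4, 5}`; `σ` shifts the pairs cyclically. -/
def schubertBases (i : Fin 3) : Finset (Finset (Fin 6)) :=
  blockBases blk6 3 (fun b => if b = i then 1 else 0) (fun b => if b = i - 1 then 1 else 2)

lemma schubertBases_eq : ![SchM1, SchM2, SchM3] = schubertBases := by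
  have h₁ : SchM1 = schubertBases 0 := by
    ext B
    simp only [SchM1, schubertBases, blockBases, Finset.mem_filter, Finset.mem_powersetCard]
    revert B
    decide
  have h₂ : SchM2 = schubertBases 1 := by
    rw [SchM2, h₁]
    decide
  have h₃ : SchM3 = schubertBases 2 := by
    rw [SchM3, h₂]
    decide
  funext i
  fin_cases i <;> simp [h₁, h₂, h₃]

set_option maxRecDepth 100000 in
lemma isBases_schubertBases : ∀ i, IsBases (schubertBases i) := by
  unfold IsBases
  decide

lemma fin_three_sub_one (i : Fin 3) : i - 1 = i + 2 := by
  fin_cases i <;> rfl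

lemma fin_three_eq_add_one_or_eq_add_one : ∀ i j : Fin 3, i ≠ j → j = i + 1 ∨ i = j + 1 := by
  decide

lemma exists_le_of_sum_eq_three {s : Fin 3 → ℝ} (h : s 0 + s 1 + s 2 = 3) :
    ∃ i, 1 ≤ s i ∧ s (i - 1) ≤ 1 := by
  by_contra! H
  have h₀ := H 0
  have h₁ := H 1
  have h₂ := H 2
  simp [fin_three_sub_one] at h₀ h₁ h₂
  grind

lemma blockSum_blk6_add {x : Fin 6 → ℝ} (hx : x ∈ hypersimplex 6 3) (i : Fin 3) :
    blockSum blk6 (i - 1) x + blockSum blk6 i x + blockSum blk6 (i + 1) x = 3 := by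
  have h : ∑ b, blockSum blk6 b x = ∑ i, x i := sum_blockSum
  have hsum : ∑ i, x i = 3 := by simpa using hx.2
  rw [hsum, Fin.sum_univ_three] at h
  rw [fin_three_sub_one]
  fin_cases i <;> simp <;> linarith

lemma indVec_mem_polytope_schubertBases_iff {i : Fin 3} {B : Finset (Fin 6)} :
    indVec 6 B ∈ polytope (schubertBases i) ↔ B ∈ schubertBases i := by
  rw [schubertBases, polytope_blockBases, indVec_mem_blockPolytope_iff]

lemma mem_polytope_schubertBases_iff {i : Fin 3} {x : Fin 6 → ℝ} :
    x ∈ polytope (schubertBases i) ↔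
      x ∈ hypersimplex 6 3 ∧ 1 ≤ blockSum blk6 i x ∧ blockSum blk6 (i - 1) x ≤ 1 := by
  rw [schubertBases, polytope_blockBases]
  simp only [blockPolytope, Set.mem_inter_iff, Set.mem_iInter, Set.mem_preimage, Set.mem_Icc]
  constructor
  · rintro ⟨hx, hb⟩
    exact ⟨hx, by simpa using (hb i).1, by simpa using (hb (i - 1)).2⟩
  · rintro ⟨hx, hi, hi'⟩
    refine ⟨hx, fun b => ⟨?_, ?_⟩⟩ <;>
      have hb : blockSum blk6 b x ∈ Set.Icc 0 2 := by
        simpa [show #(univ.filter (blk6 · = b)) = 2 by revert b; decide] using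
          blockSum_mem_Icc hx.1 b (blk := blk6)
    · split_ifs with h
      · simpa [h] using hi
      · simpa using hb.1
    · split_ifs with h
      · simpa [h] using hi'
      · simpa using hb.2

lemma iUnion_polytope_schubertBases : ⋃ i, polytope (schubertBases i) = hypersimplex 6 3 := by
  ext x
  simp only [Set.mem_iUnion, mem_polytope_schubertBases_iff]
  refine ⟨fun ⟨_, hx, _⟩ => hx, fun hx => ?_⟩
  obtain ⟨i, hi⟩ := exists_le_of_sum_eq_three (s := fun b => blockSum blk6 b x)
    (by simpa using blockSum_blk6_add hx 1)
  exact ⟨i, hx, hi⟩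

lemma polytope_schubertBases_inter_succ (i : Fin 3) :
    polytope (schubertBases i) ∩ polytope (schubertBases (i + 1)) =
        {x ∈ polytope (schubertBases i) | blockSum blk6 i x = 1} ∧
      polytope (schubertBases i) ∩ polytope (schubertBases (i + 1)) =
        {x ∈ polytope (schubertBases (i + 1)) | blockSum blk6 i x = 1} := by
  simp only [Set.ext_iff, Set.mem_inter_iff, Set.mem_ofPred_eq, mem_polytope_schubertBases_iff,
    add_sub_cancel_right]
  refine ⟨fun x => ⟨?_, ?_⟩, fun x => ⟨?_, ?_⟩⟩
  · rintro ⟨⟨hx, h₁, h₂⟩, -, -, h₃⟩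
    exact ⟨⟨hx, h₁, h₂⟩, le_antisymm h₃ h₁⟩
  · rintro ⟨⟨hx, h₁, h₂⟩, h₃⟩
    have := blockSum_blk6_add hx i
    exact ⟨⟨hx, h₁, h₂⟩, hx, by linarith, h₃.le⟩
  · rintro ⟨⟨hx, h₁, h₂⟩, -, h₃, h₄⟩
    exact ⟨⟨hx, h₃, h₄⟩, le_antisymm h₄ h₁⟩
  · rintro ⟨⟨hx, h₁, h₂⟩, h₃⟩
    have := blockSum_blk6_add hx i
    exact ⟨⟨hx, h₃.ge, by linarith⟩, hx, h₁, h₂⟩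

lemma isExposed_polytope_schubertBases_inter_succ (i : Fin 3) :
    IsExposed ℝ (polytope (schubertBases i))
        (polytope (schubertBases i) ∩ polytope (schubertBases (i + 1))) ∧
      IsExposed ℝ (polytope (schubertBases (i + 1)))
        (polytope (schubertBases i) ∩ polytope (schubertBases (i + 1))) := by
  obtain ⟨h₁, h₂⟩ := polytope_schubertBases_inter_succ i
  refine ⟨h₁ ▸ isExposed_sep_eq_of_ge fun y hy => (mem_polytope_schubertBases_iff.1 hy).2.1,
    h₂ ▸ isExposed_sep_eq_of_le fun y hy => ?_⟩
  simpa using (mem_polytope_schubertBases_iff.1 hy).2.2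

lemma exists_mem_schubertBases_notMem :
    ∀ i, (∃ B ∈ schubertBases i, B ∉ schubertBases (i + 1)) ∧
      ∃ B ∈ schubertBases (i + 1), B ∉ schubertBases i := by
  decide

lemma polytope_schubertBases_inter_succ_ne (i : Fin 3) :
    polytope (schubertBases i) ∩ polytope (schubertBases (i + 1)) ≠
        polytope (schubertBases i) ∧
      polytope (schubertBases i) ∩ polytope (schubertBases (i + 1)) ≠
        polytope (schubertBases (i + 1)) := by
  obtain ⟨⟨B, hB, hB'⟩, ⟨C, hC, hC'⟩⟩ := exists_mem_schubertBases_notMem i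
  refine ⟨fun h => hB' ?_, fun h => hC' ?_⟩
  · rw [← indVec_mem_polytope_schubertBases_iff, ← h] at hB
    exact indVec_mem_polytope_schubertBases_iff.1 hB.2
  · rw [← indVec_mem_polytope_schubertBases_iff, ← h] at hC
    exact indVec_mem_polytope_schubertBases_iff.1 hC.1

/-- `{Q(M₁), Q(M₂), Q(M₃)}` with `M₁ = SM₆(2,4,6)`, `M₂ = σM₁`, `M₃ = σ²M₁`
is a matroid subdivision of the hypersimplex `Q(U_{3,6})`. -/
theorem statement_5 :
    IsMatroidSubdivision (Finset.powersetCard 3 (Finset.univ : Finset (Fin 6)))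
      ![SchM1, SchM2, SchM3] := by
  rw [schubertBases_eq]
  refine ⟨isBases_powersetCard 6 3, isBases_schubertBases, ?_, fun i => ?_, fun i j hij => ?_⟩
  · rw [polytope_powersetCard, iUnion_polytope_schubertBases]
  · rw [polytope_powersetCard]
    exact extremePoints_polytope_subset blockBases_subset_powersetCard
  · rcases fin_three_eq_add_one_or_eq_add_one i j hij with rfl | rfl
    · obtain ⟨e₁, e₂⟩ := isExposed_polytope_schubertBases_inter_succ i
      obtain ⟨n₁, n₂⟩ := polytope_schubertBases_inter_succ_ne i
      exact ⟨e₁, e₂, n₁, n₂⟩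
    · obtain ⟨e₁, e₂⟩ := isExposed_polytope_schubertBases_inter_succ j
      obtain ⟨n₁, n₂⟩ := polytope_schubertBases_inter_succ_ne j
      rw [Set.inter_comm]
      exact ⟨e₂, e₁, n₂, n₁⟩
end

section
/- For any convex open set X ⊆ R^n, the function i_X on matroids on [n], defined by i_X(M) = 1 if Q(M) ∩ X ≠ ∅ and 0 otherwise (with i_X(∅)=0), is a valuation: for every matroid subdivision {M_1,...,M_m} of a matroid M, Σ_{A ⊆ [m]} (-1)^{|A|} i_X(M_A) = 0. -/
open Finset
open scoped Pointwise

/-!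
Inclusion–exclusion over the cells containing a point gives `∑_A (-1)^{|A|} 𝟙_{Q(M_A)} = 0`
pointwise; this rests on `⋂_{a ∈ A} Q(M_a)` being a face of each cell, hence a polytope whose
vertices are bases of `M`, hence `Q(M_A)`. A linear relation among indicator functions of compact
convex sets persists for their Euler characteristics `K ↦ [K ≠ ∅]` (Hadwiger–Groemer): slicing
along the first coordinate reduces this to the line, where `[J ≠ ∅]` is the jump of `𝟙_J` at the
right endpoint of `J`. Finally, `X` may be replaced by the convex hull of one point of each
nonempty `Q(M_A) ∩ X`, which is compact.
-/

open Filter Topology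
open scoped Classical

section Slice

variable {n : ℕ} {K : Set (Fin (n + 1) → ℝ)}

theorem IsCompact.preimage_vecCons (hK : IsCompact K) (t : ℝ) :
    IsCompact (Matrix.vecCons t ⁻¹' K) :=
  (hK.image (continuous_id.finTail)).of_isClosed_subset
    (hK.isClosed.preimage (continuous_const.matrixVecCons continuous_id))
    fun z hz => ⟨_, hz, Matrix.tail_cons t z⟩

theorem Convex.preimage_vecCons (hK : Convex ℝ K) (t : ℝ) :
    Convex ℝ (Matrix.vecCons t ⁻¹' K) := by
  intro z₁ h₁ z₂ h₂ a b ha hb hab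
  have hcons : Matrix.vecCons t (a • z₁ + b • z₂) =
      a • Matrix.vecCons t z₁ + b • Matrix.vecCons t z₂ := by
    simp [← add_mul, hab]
  simpa only [Set.mem_preimage, hcons] using hK h₁ h₂ ha hb hab

end Slice

section EulerCharacteristic

variable {ι : Type*} [Fintype ι] {G : Type*} [AddCommGroup G]

theorem eventually_nhdsGT_mem_iff {J : Set ℝ} (hJ : IsClosed J) (hJc : J.OrdConnected) (t : ℝ) :
    ∀ᶠ u in 𝓝[>] t, u ∈ J ↔ t ∈ J ∧ ∃ v ∈ J, t < v := by
  by_cases ht : t ∈ J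
  · by_cases hv : ∃ v ∈ J, t < v
    · obtain ⟨v, hvJ, htv⟩ := hv
      filter_upwards [Ioo_mem_nhdsGT htv] with u hu
      exact iff_of_true (hJc.out ht hvJ (Set.Ioo_subset_Icc_self hu)) ⟨ht, v, hvJ, htv⟩
    · filter_upwards [self_mem_nhdsWithin] with u hu
      exact iff_of_false (fun huJ => hv ⟨u, huJ, hu⟩) fun h => hv h.2
  · filter_upwards [nhdsWithin_le_nhds (hJ.isOpen_compl.mem_nhds ht)] with u hu
    exact iff_of_false hu fun h => ht h.1

/-- The relation `∑ c_i 𝟙_{J_i} = 0` passes to right limits; subtracting the limit at `t` leaves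
exactly the intervals whose right endpoint is `t`. -/
theorem Real.sum_isGreatest_eq_zero {J : ι → Set ℝ} (hJ : ∀ i, IsClosed (J i))
    (hJc : ∀ i, (J i).OrdConnected) {c : ι → G} (h : ∀ t, ∑ i with t ∈ J i, c i = 0) (t : ℝ) :
    ∑ i with IsGreatest (J i) t, c i = 0 := by
  obtain ⟨u, hu⟩ := (eventually_all.2 fun i => eventually_nhdsGT_mem_iff (hJ i) (hJc i) t).exists
  have hright : ∑ i with t ∈ J i ∧ ∃ v ∈ J i, t < v, c i = 0 := by
    rw [← h u]
    exact sum_congr (by ext i; simp [hu i]) fun _ _ => rfl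
  have hsplit : ∑ i with t ∈ J i, c i =
      ∑ i with t ∈ J i ∧ ∃ v ∈ J i, t < v, c i + ∑ i with IsGreatest (J i) t, c i := by
    rw [← sum_filter_add_sum_filter_not _ (fun i => ∃ v ∈ J i, t < v), filter_filter,
      filter_filter]
    refine congrArg _ (sum_congr ?_ fun _ _ => rfl)
    ext i
    simp only [mem_filter, mem_univ, true_and]
    simp [IsGreatest, upperBounds]
  rwa [h t, hright, zero_add, eq_comm] at hsplit

theorem Real.sum_nonempty_eq_zero {J : ι → Set ℝ} (hJ : ∀ i, IsCompact (J i))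
    (hJc : ∀ i, Convex ℝ (J i)) {c : ι → G} (h : ∀ t, ∑ i with t ∈ J i, c i = 0) :
    ∑ i with (J i).Nonempty, c i = 0 := by
  have hgreatest (i : ι) (t : ℝ) : (J i).Nonempty ∧ sSup (J i) = t ↔ IsGreatest (J i) t :=
    ⟨fun ⟨hne, hsup⟩ => hsup ▸ (hJ i).isGreatest_sSup hne, fun hg => ⟨⟨t, hg.1⟩, hg.csSup_eq⟩⟩
  rw [← sum_fiberwise_of_maps_to (g := fun i => sSup (J i))
    fun i _ => mem_image_of_mem (fun i => sSup (J i)) (mem_univ i)]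
  refine sum_eq_zero fun t _ => ?_
  rw [← sum_isGreatest_eq_zero (fun i => (hJ i).isClosed) (fun i => (hJc i).ordConnected) h t,
    filter_filter]
  simp only [hgreatest]

theorem sum_nonempty_eq_zero {n : ℕ} {K : ι → Set (Fin n → ℝ)} (hK : ∀ i, IsCompact (K i))
    (hKc : ∀ i, Convex ℝ (K i)) {c : ι → G} (h : ∀ y, ∑ i with y ∈ K i, c i = 0) :
    ∑ i with (K i).Nonempty, c i = 0 := by
  induction n with
  | zero =>
    rw [← h default]
    refine sum_congr ?_ fun _ _ => rfl
    ext i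
    simp only [mem_filter, mem_univ, true_and]
    exact ⟨fun ⟨y, hy⟩ => Subsingleton.elim y default ▸ hy, fun hy => ⟨_, hy⟩⟩
  | succ n ih =>
    have hslice (t : ℝ) : ∑ i with t ∈ (· 0) '' K i, c i = 0 := by
      rw [← ih (fun i => (hK i).preimage_vecCons t) (fun i => (hKc i).preimage_vecCons t)
        fun z => h (Matrix.vecCons t z)]
      refine sum_congr ?_ fun _ _ => rfl
      ext i
      simp only [mem_filter, mem_univ, true_and, Set.mem_image]
      constructor
      · rintro ⟨y, hy, rfl⟩
        exact ⟨Matrix.vecTail y, (Matrix.cons_head_tail y).symm ▸ hy⟩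
      · rintro ⟨z, hz⟩
        exact ⟨_, hz, Matrix.cons_val_zero t z⟩
    rw [← Real.sum_nonempty_eq_zero (fun i => (hK i).image (continuous_apply 0))
      (fun i => (hKc i).linear_image (LinearMap.proj 0)) hslice]
    simp only [Set.image_nonempty]

theorem sum_inter_nonempty_eq_zero {n : ℕ} {K : ι → Set (Fin n → ℝ)} (hK : ∀ i, IsCompact (K i))
    (hKc : ∀ i, Convex ℝ (K i)) {X : Set (Fin n → ℝ)} (hX : Convex ℝ X) {c : ι → G}
    (h : ∀ y, ∑ i with y ∈ K i, c i = 0) :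
    ∑ i with (K i ∩ X).Nonempty, c i = 0 := by
  set C := convexHull ℝ (Set.range fun i : {i // (K i ∩ X).Nonempty} => i.2.some)
  have hCX : C ⊆ X := convexHull_min (Set.range_subset_iff.2 fun i => i.2.some_mem.2) hX
  have hne (i : ι) : (K i ∩ X).Nonempty ↔ (K i ∩ C).Nonempty :=
    ⟨fun hi => ⟨hi.some, hi.some_mem.1, subset_convexHull ℝ _ ⟨⟨i, hi⟩, rfl⟩⟩,
      fun ⟨y, hyK, hyC⟩ => ⟨y, hyK, hCX hyC⟩⟩
  have hCcpt : IsCompact C := (Set.finite_range _).isCompact_convexHull ℝ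
  simp only [hne]
  refine sum_nonempty_eq_zero (fun i => (hK i).inter_right hCcpt.isClosed)
    (fun i => (hKc i).inter (convex_convexHull ℝ _)) fun y => ?_
  by_cases hy : y ∈ C
  · simpa [hy] using h y
  · simp [hy]

end EulerCharacteristic

section Matroid

variable {n m : ℕ} {𝓑 : Finset (Finset (Fin n))} {𝓜 : Fin m → Finset (Finset (Fin n))}

theorem isCompact_polytope (𝓑 : Finset (Finset (Fin n))) : IsCompact (polytope 𝓑) :=
  (𝓑.finite_toSet.image _).isCompact_convexHull ℝ

theorem convex_polytope (𝓑 : Finset (Finset (Fin n))) : Convex ℝ (polytope 𝓑) :=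
  convex_convexHull ℝ _

theorem polytope_mono {𝓑' : Finset (Finset (Fin n))} (h : 𝓑' ⊆ 𝓑) : polytope 𝓑' ⊆ polytope 𝓑 :=
  convexHull_mono (Set.image_mono (coe_subset.2 h))

theorem polytope_interMatroid_subset_biInter (A : Finset (Fin m)) :
    polytope (interMatroid 𝓑 𝓜 A) ⊆ ⋂ a ∈ A, polytope (𝓜 a) := by
  refine convexHull_min ?_ (convex_iInter₂ fun a _ => convex_polytope _)
  rintro _ ⟨B, hB, rfl⟩
  exact Set.mem_iInter₂.2 (mem_filter.1 hB).2

/-- The vertices of `⋂ a ∈ A, Q(M_a)` are vertices of `Q(M)`, because this intersection is a face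
of each `Q(M_a)`; so by Krein–Milman it is the polytope of the bases of `M` it contains. -/
theorem biInter_polytope_subset_polytope_interMatroid
    (hsub : IsSubdivision (polytope 𝓑) fun i => polytope (𝓜 i)) {A : Finset (Fin m)}
    (hA : A.Nonempty) : ⋂ a ∈ A, polytope (𝓜 a) ⊆ polytope (interMatroid 𝓑 𝓜 A) := by
  obtain ⟨-, hvert, hfaces⟩ := hsub
  obtain ⟨a₀, ha₀⟩ := hA
  set F := ⋂ a ∈ A, polytope (𝓜 a)
  have hface : IsExtreme ℝ (polytope (𝓜 a₀)) F := by
    refine ⟨Set.biInter_subset_of_mem ha₀, fun x₁ hx₁ x₂ hx₂ x hx hseg => ?_⟩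
    rw [Set.mem_iInter₂] at hx ⊢
    intro a ha
    rcases eq_or_ne a₀ a with rfl | hne
    · exact hx₁
    · exact ((hfaces a₀ a hne).1.isExtreme.2 hx₁ hx₂ ⟨hx a₀ ha₀, hx a ha⟩ hseg).2
  have hFcpt : IsCompact F := (isCompact_polytope _).of_isClosed_subset
    (isClosed_biInter fun a _ => (isCompact_polytope _).isClosed) hface.1
  have hvertF : Set.extremePoints ℝ F ⊆ indVec n '' ↑(interMatroid 𝓑 𝓜 A) := by
    intro v hv
    obtain ⟨B, hB, rfl⟩ :=
      extremePoints_convexHull_subset (hvert a₀ (hface.extremePoints_subset_extremePoints hv))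
    exact ⟨B, mem_filter.2 ⟨hB, Set.mem_iInter₂.1 hv.1⟩, rfl⟩
  calc F = closure (convexHull ℝ (Set.extremePoints ℝ F)) :=
        (closure_convexHull_extremePoints hFcpt (convex_iInter₂ fun a _ => convex_polytope _)).symm
    _ ⊆ closure (polytope (interMatroid 𝓑 𝓜 A)) := closure_mono (convexHull_mono hvertF)
    _ = polytope (interMatroid 𝓑 𝓜 A) := (isCompact_polytope _).isClosed.closure_eq

theorem mem_polytope_interMatroid_iff (hsub : IsSubdivision (polytope 𝓑) fun i => polytope (𝓜 i))
    {A : Finset (Fin m)} {y : Fin n → ℝ} :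
    y ∈ polytope (interMatroid 𝓑 𝓜 A) ↔ y ∈ polytope 𝓑 ∧ ∀ a ∈ A, y ∈ polytope (𝓜 a) := by
  refine ⟨fun hy => ⟨polytope_mono (filter_subset _ _) hy,
    Set.mem_iInter₂.1 (polytope_interMatroid_subset_biInter A hy)⟩, fun ⟨hy, hyA⟩ => ?_⟩
  rcases A.eq_empty_or_nonempty with rfl | hA
  · rwa [interMatroid, filter_true_of_mem fun _ _ a ha => absurd ha (notMem_empty a)]
  · exact biInter_polytope_subset_polytope_interMatroid hsub hA (Set.mem_iInter₂.2 hyA)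

theorem sum_mem_polytope_interMatroid_eq_zero
    (hsub : IsSubdivision (polytope 𝓑) fun i => polytope (𝓜 i)) (y : Fin n → ℝ) :
    ∑ A with y ∈ polytope (interMatroid 𝓑 𝓜 A), (-1 : ℤ) ^ A.card = 0 := by
  simp_rw [mem_polytope_interMatroid_iff hsub]
  by_cases hy : y ∈ polytope 𝓑
  · have hT : (univ.filter fun a => y ∈ polytope (𝓜 a)).Nonempty := by
      obtain ⟨a, ha⟩ := Set.mem_iUnion.1 (hsub.1.symm ▸ hy)
      exact ⟨a, mem_filter.2 ⟨mem_univ a, ha⟩⟩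
    rw [← sum_powerset_neg_one_pow_card_of_nonempty hT]
    refine sum_congr ?_ fun _ _ => rfl
    ext A
    simp [hy, subset_iff]
  · simp [hy]

end Matroid

open Classical in
theorem statement_7_general (n : ℕ) (X : Set (Fin n → ℝ)) (hconv : Convex ℝ X) :
    IsValuation fun 𝓑 : Finset (Finset (Fin n)) =>
      if (polytope 𝓑 ∩ X).Nonempty then (1 : ℤ) else 0 := by
  rintro m 𝓑 𝓜 ⟨-, -, hsub⟩
  simp only [smul_eq_mul, mul_ite, mul_one, mul_zero, ← sum_filter]
  exact sum_inter_nonempty_eq_zero (fun _ => isCompact_polytope _) (fun _ => convex_polytope _)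
    hconv (sum_mem_polytope_interMatroid_eq_zero hsub)

open Classical in
/-- For any convex open `X ⊆ ℝⁿ`, the function `i_X(M) = 1` if `Q(M) ∩ X ≠ ∅`
and `0` otherwise is a valuation under matroid subdivisions. -/
theorem statement_7 (n : ℕ) (X : Set (Fin n → ℝ)) (hconv : Convex ℝ X) (hopen : IsOpen X) :
    IsValuation fun 𝓑 : Finset (Finset (Fin n)) =>
      if (polytope 𝓑 ∩ X).Nonempty then (1 : ℤ) else 0 :=
  statement_7_general n X hconv
end

section
/- The function b(M) = (number of bases of M) is a valuation under matroid subdivisions: for any matroid subdivision {M_1,...,M_m} of M, b(M) = Σ_i b(M_i) − Σ_{i<j} b(M_{ij}) + Σ_{i<j<k} b(M_{ijk}) − ⋯. -/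
open Finset
open scoped Pointwise

/-- The number of bases is a valuation under matroid subdivisions. -/
theorem statement_12 (n : ℕ) :
    IsValuation fun 𝓑 : Finset (Finset (Fin n)) => (𝓑.card : ℤ) := by
  intro m 𝓑 𝓜 hsub
  classical
  have key : ∀ B ∈ 𝓑, ∃ i, indVec n B ∈ polytope (𝓜 i) := by
    intro B hB
    have h1 : indVec n B ∈ polytope 𝓑 :=
      subset_convexHull ℝ _ ⟨B, by simpa using hB, rfl⟩
    rw [← hsub.2.2.1] at h1
    simpa using h1
  calc ∑ A : Finset (Fin m), (-1:ℤ)^A.card • ((interMatroid 𝓑 𝓜 A).card : ℤ)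
      = ∑ A : Finset (Fin m), ∑ B ∈ 𝓑,
          (-1:ℤ)^A.card * (if ∀ a ∈ A, indVec n B ∈ polytope (𝓜 a) then 1 else 0) := by
        refine Finset.sum_congr rfl fun A _ => ?_
        rw [zsmul_eq_mul, interMatroid, Finset.card_filter]
        push_cast
        rw [Finset.mul_sum]
    _ = ∑ B ∈ 𝓑, ∑ A : Finset (Fin m),
          (-1:ℤ)^A.card * (if ∀ a ∈ A, indVec n B ∈ polytope (𝓜 a) then 1 else 0) :=
        Finset.sum_comm
    _ = 0 := by
        refine Finset.sum_eq_zero fun B hB => ?_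
        set S := Finset.univ.filter (fun a : Fin m => indVec n B ∈ polytope (𝓜 a)) with hS
        have hcond : ∀ A : Finset (Fin m),
            (∀ a ∈ A, indVec n B ∈ polytope (𝓜 a)) ↔ A ∈ S.powerset := by
          intro A
          simp only [Finset.mem_powerset, hS]
          constructor
          · intro h a ha
            simp only [Finset.mem_filter, Finset.mem_univ, true_and]
            exact h a ha
          · intro h a ha
            have := h ha
            simp only [Finset.mem_filter] at this
            exact this.2
        have h1 : ∑ A : Finset (Fin m),
            (-1:ℤ)^A.card * (if ∀ a ∈ A, indVec n B ∈ polytope (𝓜 a) then 1 else 0)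
            = ∑ A ∈ S.powerset, (-1:ℤ)^A.card := by
          simp only [mul_ite, mul_one, mul_zero]
          rw [← Finset.sum_filter]
          refine Finset.sum_congr ?_ fun _ _ => rfl
          ext A
          simp only [Finset.mem_filter, Finset.mem_univ, true_and]
          exact hcond A
        rw [h1, Finset.sum_powerset_neg_one_pow_card, if_neg]
        obtain ⟨i, hi⟩ := key B hB
        intro hSe
        have : i ∈ S := by simp [hS, hi]
        simp [hSe] at this
end

section
/- Let B ⊆ [n], E ⊆ [n]\B, I ⊆ B. Let V(B,E,I) be the set of A ⊆ [n] with e_A − e_B = e_a − e_b where either a ∈ E and a > b, or b ∈ I and a < b; and let P(B,E,I) = conv{ (e_A + e_B)/2 : A ∈ V(B,E,I) }. Then for any matroid M on [n], Q(M) ∩ P(B,E,I) = ∅ if and only if B is not a basis of M, or B is a basis of M with E ⊆ E(B) and I ⊆ I(B). -/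
open Finset
open scoped Pointwise

/-- `a ∉ B` is externally active w.r.t. the basis `B` if `a < b` for every `b ∈ B`
such that `B - b ∪ a` is a basis. -/
def ExtActive {n : ℕ} (𝓑 : Finset (Finset (Fin n))) (B : Finset (Fin n)) (a : Fin n) : Prop :=
  a ∉ B ∧ ∀ b ∈ B, insert a (B.erase b) ∈ 𝓑 → a < b

/-- `b ∈ B` is internally active w.r.t. the basis `B` if `b < a` for every `a ∉ B`
such that `B - b ∪ a` is a basis. -/
def IntActive {n : ℕ} (𝓑 : Finset (Finset (Fin n))) (B : Finset (Fin n)) (b : Fin n) : Prop :=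
  b ∈ B ∧ ∀ a, a ∉ B → insert a (B.erase b) ∈ 𝓑 → b < a

/-- `V(B,E,I)`: the sets `A ⊆ [n]` with `e_A - e_B = e_a - e_b` where either
`a ∈ E` and `a > b`, or `b ∈ I` and `a < b`. -/
def VSet {n : ℕ} (B E I : Finset (Fin n)) : Set (Finset (Fin n)) :=
  {A | ∃ a, a ∉ B ∧ ∃ b ∈ B, A = insert a (B.erase b) ∧
    ((a ∈ E ∧ b < a) ∨ (b ∈ I ∧ a < b))}

/-- `P(B,E,I) = conv{(e_A + e_B)/2 : A ∈ V(B,E,I)}`. -/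
def PBEI {n : ℕ} (B E I : Finset (Fin n)) : Set (Fin n → ℝ) :=
  convexHull ℝ ((fun A => (2 : ℝ)⁻¹ • (indVec n A + indVec n B)) '' VSet B E I)

theorem bases_card_aux {n : ℕ} {𝓑 : Finset (Finset (Fin n))} (hM : IsBases 𝓑) :
    ∀ (k : ℕ) (B₁ B₂ : Finset (Fin n)), B₁ ∈ 𝓑 → B₂ ∈ 𝓑 → (B₁ \ B₂).card = k →
      B₁.card = B₂.card := by
  intro k
  induction k with
  | zero =>
    intro B₁ B₂ h1 h2 hk
    have hsub : B₁ ⊆ B₂ := sdiff_eq_empty_iff_subset.mp (card_eq_zero.mp hk)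
    have hsub2 : B₂ ⊆ B₁ := by
      by_contra hc
      obtain ⟨b, hb⟩ := sdiff_nonempty.mpr hc
      obtain ⟨b₂, hb₂, -⟩ := hM B₂ h2 B₁ h1 b hb
      exact (mem_sdiff.mp hb₂).2 (hsub (mem_sdiff.mp hb₂).1)
    exact le_antisymm (card_le_card hsub) (card_le_card hsub2)
  | succ k ih =>
    intro B₁ B₂ h1 h2 hk
    have hne : (B₁ \ B₂).Nonempty := by rw [← card_pos, hk]; omega
    obtain ⟨b₁, hb₁⟩ := hne
    obtain ⟨b₂, hb₂, hB'⟩ := hM B₁ h1 B₂ h2 b₁ hb₁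
    have hb₁B : b₁ ∈ B₁ := (mem_sdiff.mp hb₁).1
    have hb₁nB₂ : b₁ ∉ B₂ := (mem_sdiff.mp hb₁).2
    have hb₂B₂ : b₂ ∈ B₂ := (mem_sdiff.mp hb₂).1
    have hb₂nB₁ : b₂ ∉ B₁ := (mem_sdiff.mp hb₂).2
    have hpos : 0 < B₁.card := card_pos.mpr ⟨b₁, hb₁B⟩
    have hcard : (insert b₂ (B₁.erase b₁)).card = B₁.card := by
      rw [card_insert_of_notMem (fun h => hb₂nB₁ (mem_of_mem_erase h)),
        card_erase_of_mem hb₁B]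
      omega
    have hsd : (insert b₂ (B₁.erase b₁)) \ B₂ = (B₁ \ B₂).erase b₁ := by
      ext x
      simp only [mem_sdiff, mem_erase, mem_insert]
      constructor
      · rintro ⟨hx1 | ⟨hx1, hx2⟩, hx3⟩
        · exact absurd (hx1 ▸ hb₂B₂) hx3
        · exact ⟨hx1, hx2, hx3⟩
      · rintro ⟨hx1, hx2, hx3⟩
        exact ⟨Or.inr ⟨hx1, hx2⟩, hx3⟩
    have hsdc : ((insert b₂ (B₁.erase b₁)) \ B₂).card = k := by
      rw [hsd, card_erase_of_mem hb₁, hk]; omega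
    rw [← hcard]
    exact ih _ _ hB' h2 hsdc

def Fe {n : ℕ} (B : Finset (Fin n)) (a : Fin n) : Finset (Fin n) :=
  insert a (B.filter (fun j => a < j))

def Gi {n : ℕ} (B : Finset (Fin n)) (b : Fin n) : Finset (Fin n) :=
  insert b (univ.filter (fun j => j ∉ B ∧ b < j))

theorem ext_not_subset {n : ℕ} {𝓑 : Finset (Finset (Fin n))} (hM : IsBases 𝓑)
    {B : Finset (Fin n)} (hB : B ∈ 𝓑) {a : Fin n} (ha : ExtActive 𝓑 B a) :
    ∀ (k : ℕ) (C : Finset (Fin n)), C ∈ 𝓑 → (C \ B).card = k → ¬ (Fe B a ⊆ C) := by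
  intro k
  induction k with
  | zero =>
    intro C hC hk hsub
    have haC : a ∈ C := hsub (mem_insert_self _ _)
    have : C ⊆ B := sdiff_eq_empty_iff_subset.mp (card_eq_zero.mp hk)
    exact ha.1 (this haC)
  | succ k ih =>
    intro C hC hk hsub
    have haC : a ∈ C := hsub (mem_insert_self _ _)
    have haB : a ∉ B := ha.1
    by_cases hcase : ∃ c ∈ C \ B, c ≠ a
    · obtain ⟨c, hc, hca⟩ := hcase
      have hcC : c ∈ C := (mem_sdiff.mp hc).1
      have hcB : c ∉ B := (mem_sdiff.mp hc).2
      obtain ⟨d, hd, hC'⟩ := hM C hC B hB c hc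
      have hdB : d ∈ B := (mem_sdiff.mp hd).1
      have hdC : d ∉ C := (mem_sdiff.mp hd).2
      refine ih (insert d (C.erase c)) hC' ?_ ?_
      · have : (insert d (C.erase c)) \ B = (C \ B).erase c := by
          ext x
          simp only [mem_sdiff, mem_erase, mem_insert]
          constructor
          · rintro ⟨hx1 | ⟨hx1, hx2⟩, hx3⟩
            · exact absurd (hx1 ▸ hdB) hx3
            · exact ⟨hx1, hx2, hx3⟩
          · rintro ⟨hx1, hx2, hx3⟩
            exact ⟨Or.inr ⟨hx1, hx2⟩, hx3⟩
        rw [this, card_erase_of_mem hc, hk]; omega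
      · intro x hx
        have hxC : x ∈ C := hsub hx
        have hxc : x ≠ c := by
          rintro rfl
          rcases mem_insert.mp hx with h | h
          · exact hca (id h.symm ▸ rfl)
          · exact hcB (mem_of_mem_filter _ h)
        exact mem_insert.mpr (Or.inr (mem_erase.mpr ⟨hxc, hxC⟩))
    · -- C \ B = {a}
      push_neg at hcase
      have hCB : C \ B = {a} := by
        apply eq_singleton_iff_nonempty_unique_mem.mpr
        exact ⟨⟨a, mem_sdiff.mpr ⟨haC, haB⟩⟩, fun x hx => hcase x hx⟩
      have hcardC : C.card = B.card := bases_card_aux hM 1 C B hC hB (by simp [hCB])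
      have hBC : (B \ C).card = 1 := by
        have h1 := card_sdiff_add_card_inter C B
        have h2 := card_sdiff_add_card_inter B C
        rw [inter_comm B C] at h2
        have : (C \ B).card = 1 := by rw [hCB]; rfl
        omega
      obtain ⟨b, hb⟩ := card_eq_one.mp hBC
      have hbB : b ∈ B := by
        have : b ∈ B \ C := hb ▸ mem_singleton_self b
        exact (mem_sdiff.mp this).1
      have hbC : b ∉ C := by
        have : b ∈ B \ C := hb ▸ mem_singleton_self b
        exact (mem_sdiff.mp this).2
      have hCeq : C = insert a (B.erase b) := by
        ext x
        simp only [mem_insert, mem_erase]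
        constructor
        · intro hx
          by_cases hxa : x = a
          · exact Or.inl hxa
          · right
            have hxB : x ∈ B := by
              by_contra hxB
              have : x ∈ C \ B := mem_sdiff.mpr ⟨hx, hxB⟩
              rw [hCB] at this
              exact hxa (mem_singleton.mp this)
            refine ⟨fun hxb => hbC (hxb ▸ hx), hxB⟩
        · rintro (rfl | ⟨hxb, hxB⟩)
          · exact haC
          · by_contra hxC
            have : x ∈ B \ C := mem_sdiff.mpr ⟨hxB, hxC⟩
            rw [hb] at this
            exact hxb (mem_singleton.mp this)
      have hlt : a < b := ha.2 b hbB (hCeq ▸ hC)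
      have : b ∈ Fe B a := mem_insert.mpr (Or.inr (mem_filter.mpr ⟨hbB, hlt⟩))
      exact hbC (hsub this)

theorem ext_card_le {n : ℕ} {𝓑 : Finset (Finset (Fin n))} (hM : IsBases 𝓑)
    {B : Finset (Fin n)} (hB : B ∈ 𝓑) {a : Fin n} (ha : ExtActive 𝓑 B a)
    {C : Finset (Fin n)} (hC : C ∈ 𝓑) : (C ∩ Fe B a).card ≤ (B ∩ Fe B a).card := by
  have hnotsub := ext_not_subset hM hB ha (C \ B).card C hC rfl
  have hBF : B ∩ Fe B a = B.filter (fun j => a < j) := by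
    ext x
    simp only [mem_inter, Fe, mem_insert, mem_filter]
    constructor
    · rintro ⟨hxB, rfl | hx⟩
      · exact absurd hxB ha.1
      · exact hx
    · intro hx
      exact ⟨hx.1, Or.inr hx⟩
  have hanf : a ∉ B.filter (fun j => a < j) := fun h => ha.1 (mem_of_mem_filter _ h)
  have hFcard : (Fe B a).card = (B ∩ Fe B a).card + 1 := by
    rw [hBF, Fe, card_insert_of_notMem hanf]
  have hne : C ∩ Fe B a ≠ Fe B a := by
    intro h
    exact hnotsub (fun x hx => (mem_inter.mp (h ▸ hx)).1)
  have hss : C ∩ Fe B a ⊂ Fe B a := Finset.ssubset_iff_subset_ne.mpr ⟨inter_subset_right, hne⟩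
  have := card_lt_card hss
  omega

theorem int_card_le {n : ℕ} {𝓑 : Finset (Finset (Fin n))} (hM : IsBases 𝓑)
    {B : Finset (Fin n)} (hB : B ∈ 𝓑) {b : Fin n} (hb : IntActive 𝓑 B b)
    {C : Finset (Fin n)} (hC : C ∈ 𝓑) : (C ∩ (Gi B b)ᶜ).card ≤ (B ∩ (Gi B b)ᶜ).card := by
  have hbB : b ∈ B := hb.1
  have hcardC : C.card = B.card := bases_card_aux hM (C \ B).card C B hC hB rfl
  -- every basis meets Gi
  have hmeet : (C ∩ Gi B b).Nonempty := by
    by_cases hbC : b ∈ C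
    · exact ⟨b, mem_inter.mpr ⟨hbC, mem_insert_self _ _⟩⟩
    · obtain ⟨c, hc, hC'⟩ := hM B hB C hC b (mem_sdiff.mpr ⟨hbB, hbC⟩)
      have hcC : c ∈ C := (mem_sdiff.mp hc).1
      have hcB : c ∉ B := (mem_sdiff.mp hc).2
      have hlt : b < c := hb.2 c hcB hC'
      exact ⟨c, mem_inter.mpr ⟨hcC, mem_insert.mpr (Or.inr (mem_filter.mpr
        ⟨mem_univ c, hcB, hlt⟩))⟩⟩
  have hBGi : B ∩ Gi B b = {b} := by
    ext x
    simp only [mem_inter, Gi, mem_insert, mem_filter, mem_singleton, mem_univ, true_and]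
    constructor
    · rintro ⟨hxB, rfl | ⟨hxnB, -⟩⟩
      · rfl
      · exact absurd hxB hxnB
    · rintro rfl
      exact ⟨hbB, Or.inl rfl⟩
  have h1 : (C ∩ (Gi B b)ᶜ).card + (C ∩ Gi B b).card = C.card := by
    rw [← sdiff_eq_inter_compl]
    exact card_sdiff_add_card_inter C (Gi B b)
  have h2 : (B ∩ (Gi B b)ᶜ).card + (B ∩ Gi B b).card = B.card := by
    rw [← sdiff_eq_inter_compl]
    exact card_sdiff_add_card_inter B (Gi B b)
  have h3 : 1 ≤ (C ∩ Gi B b).card := card_pos.mpr hmeet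
  have h4 : (B ∩ Gi B b).card = 1 := by rw [hBGi]; rfl
  omega

theorem geom_two_sum (k : ℕ) : ∑ m ∈ range k, (2:ℝ)^m = 2^k - 1 := by
  induction k with
  | zero => simp
  | succ m ih => rw [sum_range_succ, ih]; ring

theorem sum_two_pow_le {n : ℕ} (T : Finset (Fin n)) (k : Fin n) (h : ∀ j ∈ T, j < k) :
    ∑ j ∈ T, (2:ℝ)^(j:ℕ) ≤ 2^(k:ℕ) - 1 := by
  have h1 : ∑ j ∈ T, (2:ℝ)^(j:ℕ) = ∑ m ∈ T.image Fin.val, (2:ℝ)^m :=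
    (sum_image (fun x _ y _ hxy => Fin.val_injective hxy)).symm
  have h2 : T.image Fin.val ⊆ range (k:ℕ) := by
    intro m hm
    obtain ⟨j, hj, rfl⟩ := mem_image.mp hm
    exact mem_range.mpr (h j hj)
  rw [h1, ← geom_two_sum (k:ℕ)]
  exact sum_le_sum_of_subset_of_nonneg h2 (fun i _ _ => by positivity)

def wF {n : ℕ} (B E : Finset (Fin n)) : Fin n → Finset (Fin n) :=
  fun j => if j ∈ E then Fe B j else (Gi B j)ᶜ

def wgt {n : ℕ} (B E I : Finset (Fin n)) : Fin n → ℝ :=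
  fun i => ∑ j ∈ E ∪ I, (if i ∈ wF B E j then (2:ℝ)^(j:ℕ) else 0)

theorem wgt_sum {n : ℕ} (B E I C : Finset (Fin n)) :
    ∑ i ∈ C, wgt B E I i = ∑ j ∈ E ∪ I, ((C ∩ wF B E j).card : ℝ) * 2^(j:ℕ) := by
  unfold wgt
  rw [sum_comm]
  refine sum_congr rfl (fun j _ => ?_)
  rw [sum_ite_mem, sum_const, nsmul_eq_mul]

theorem wgt_basis_le {n : ℕ} {𝓑 : Finset (Finset (Fin n))} (hM : IsBases 𝓑)
    {B E I : Finset (Fin n)} (hB : B ∈ 𝓑)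
    (hE : ∀ a ∈ E, a ∉ B) (hI : I ⊆ B)
    (hEact : ∀ a ∈ E, ExtActive 𝓑 B a) (hIact : ∀ b ∈ I, IntActive 𝓑 B b)
    {C : Finset (Fin n)} (hC : C ∈ 𝓑) :
    ∑ i ∈ C, wgt B E I i ≤ ∑ i ∈ B, wgt B E I i := by
  rw [wgt_sum, wgt_sum]
  refine sum_le_sum (fun j hj => ?_)
  have hcard : (C ∩ wF B E j).card ≤ (B ∩ wF B E j).card := by
    by_cases hjE : j ∈ E
    · rw [wF, if_pos hjE]
      exact ext_card_le hM hB (hEact j hjE) hC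
    · have hjI : j ∈ I := by
        rcases mem_union.mp hj with h | h
        · exact absurd h hjE
        · exact h
      rw [wF, if_neg hjE]
      exact int_card_le hM hB (hIact j hjI) hC
  have : ((C ∩ wF B E j).card : ℝ) ≤ ((B ∩ wF B E j).card : ℝ) := Nat.cast_le.mpr hcard
  have hpow : (0:ℝ) ≤ 2^(j:ℕ) := by positivity
  nlinarith

theorem wgt_pair {n : ℕ} {B E I : Finset (Fin n)}
    (hE : ∀ a ∈ E, a ∉ B) (hI : I ⊆ B) {a b : Fin n}
    (haB : a ∉ B) (hbB : b ∈ B)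
    (hpair : (a ∈ E ∧ b < a) ∨ (b ∈ I ∧ a < b)) :
    wgt B E I b + 1 ≤ wgt B E I a := by
  -- key element
  obtain ⟨k, hkS, hak, hbk, hmono⟩ :
      ∃ k, k ∈ E ∪ I ∧ a ∈ wF B E k ∧ b ∉ wF B E k ∧
        ∀ j ∈ E ∪ I, j ≠ k → ¬ j < k → (b ∈ wF B E j → a ∈ wF B E j) := by
    rcases hpair with ⟨haE, hba⟩ | ⟨hbI, hab⟩
    · refine ⟨a, mem_union_left _ haE, ?_, ?_, ?_⟩
      · rw [wF, if_pos haE]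
        exact mem_insert_self _ _
      · rw [wF, if_pos haE]
        intro hmem
        rcases mem_insert.mp hmem with h | h
        · exact haB (h ▸ hbB)
        · exact absurd (mem_filter.mp h).2 (not_lt_of_gt hba)
      · intro j hj hja hjlt
        have haj : a < j := lt_of_le_of_ne (not_lt.mp hjlt) (Ne.symm hja)
        by_cases hjE : j ∈ E
        · rw [wF, if_pos hjE]
          intro hmem
          exfalso
          rcases mem_insert.mp hmem with h | h
          · exact hE j hjE (h ▸ hbB)
          · exact absurd (mem_filter.mp h).2 (not_lt_of_gt (hba.trans haj))
        · rw [wF, if_neg hjE]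
          intro _
          rw [mem_compl]
          intro hmem
          rcases mem_insert.mp hmem with h | h
          · exact haB (h ▸ hI (by rcases mem_union.mp hj with h' | h'; exact absurd h' hjE; exact h'))
          · exact absurd ((mem_filter.mp h).2).2 (not_lt_of_gt haj)
    · have hbE : b ∉ E := fun h => hE b h hbB
      refine ⟨b, mem_union_right _ hbI, ?_, ?_, ?_⟩
      · rw [wF, if_neg hbE, mem_compl]
        intro hmem
        rcases mem_insert.mp hmem with h | h
        · exact haB (h ▸ hbB)
        · exact absurd ((mem_filter.mp h).2).2 (not_lt_of_gt hab)
      · rw [wF, if_neg hbE, mem_compl, not_not]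
        exact mem_insert_self _ _
      · intro j hj hjb hjlt
        have hbj : b < j := lt_of_le_of_ne (not_lt.mp hjlt) (Ne.symm hjb)
        by_cases hjE : j ∈ E
        · rw [wF, if_pos hjE]
          intro hmem
          exfalso
          rcases mem_insert.mp hmem with h | h
          · exact hE j hjE (h ▸ hbB)
          · exact absurd (mem_filter.mp h).2 (not_lt_of_gt hbj)
        · rw [wF, if_neg hjE]
          intro _
          rw [mem_compl]
          intro hmem
          rcases mem_insert.mp hmem with h | h
          · exact haB (h ▸ hI (by rcases mem_union.mp hj with h' | h'; exact absurd h' hjE; exact h'))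
          · exact absurd ((mem_filter.mp h).2).2 (not_lt_of_gt (hab.trans hbj))
  -- now the numeric estimate
  set S := E ∪ I with hS
  have hsplit : ∀ x : Fin n,
      wgt B E I x = (if x ∈ wF B E k then (2:ℝ)^(k:ℕ) else 0) +
        ∑ j ∈ S.erase k, (if x ∈ wF B E j then (2:ℝ)^(j:ℕ) else 0) := by
    intro x
    rw [wgt, ← hS]
    exact (Finset.add_sum_erase S (fun j => if x ∈ wF B E j then (2:ℝ)^(j:ℕ) else 0) hkS).symm
  rw [hsplit a, hsplit b, if_pos hak, if_neg hbk]
  have hterm : ∀ j ∈ S.erase k,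
      (if b ∈ wF B E j then (2:ℝ)^(j:ℕ) else 0) ≤
        (if a ∈ wF B E j then (2:ℝ)^(j:ℕ) else 0) + (if j < k then (2:ℝ)^(j:ℕ) else 0) := by
    intro j hj
    have hjS : j ∈ S := mem_of_mem_erase hj
    have hjk : j ≠ k := ne_of_mem_erase hj
    by_cases hlt : j < k
    · rw [if_pos hlt]
      have h0 : (0:ℝ) ≤ 2^(j:ℕ) := by positivity
      split_ifs <;> linarith
    · rw [if_neg hlt]
      by_cases hbj : b ∈ wF B E j
      · rw [if_pos hbj, if_pos (hmono j hjS hjk hlt hbj)]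
        simp
      · rw [if_neg hbj]
        split_ifs with h1
        · positivity
        · simp
  have hsum1 : ∑ j ∈ S.erase k, (if b ∈ wF B E j then (2:ℝ)^(j:ℕ) else 0) ≤
      ∑ j ∈ S.erase k, (if a ∈ wF B E j then (2:ℝ)^(j:ℕ) else 0) +
        ∑ j ∈ S.erase k, (if j < k then (2:ℝ)^(j:ℕ) else 0) := by
    rw [← sum_add_distrib]
    exact sum_le_sum hterm
  have hsum2 : ∑ j ∈ S.erase k, (if j < k then (2:ℝ)^(j:ℕ) else 0) ≤ 2^(k:ℕ) - 1 := by
    rw [sum_ite, sum_const_zero, add_zero]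
    exact sum_two_pow_le _ k (fun j hj => (mem_filter.mp hj).2)
  linarith

theorem lin_eval {n : ℕ} (w : Fin n → ℝ) :
    IsLinearMap ℝ (fun x : Fin n → ℝ => ∑ i, w i * x i) := by
  constructor
  · intro x y
    simp only [Pi.add_apply, mul_add]
    exact sum_add_distrib
  · intro c x
    simp only [Pi.smul_apply, smul_eq_mul, Finset.mul_sum]
    exact sum_congr rfl (fun i _ => by ring)

theorem hull_le {n : ℕ} {S : Set (Fin n → ℝ)} {w : Fin n → ℝ} {c : ℝ}
    (h : ∀ x ∈ S, (∑ i, w i * x i) ≤ c) {p : Fin n → ℝ} (hp : p ∈ convexHull ℝ S) :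
    (∑ i, w i * p i) ≤ c :=
  convexHull_min h (convex_halfSpace_le (lin_eval w) c) hp

theorem hull_ge {n : ℕ} {S : Set (Fin n → ℝ)} {w : Fin n → ℝ} {c : ℝ}
    (h : ∀ x ∈ S, c ≤ (∑ i, w i * x i)) {p : Fin n → ℝ} (hp : p ∈ convexHull ℝ S) :
    c ≤ (∑ i, w i * p i) :=
  convexHull_min h (convex_halfSpace_ge (lin_eval w) c) hp

theorem eval_ind {n : ℕ} (w : Fin n → ℝ) (C : Finset (Fin n)) :
    ∑ i, w i * indVec n C i = ∑ i ∈ C, w i := by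
  simp only [indVec, mul_ite, mul_one, mul_zero]
  rw [sum_ite_mem, univ_inter]

theorem eval_mid {n : ℕ} (w : Fin n → ℝ) (A B : Finset (Fin n)) :
    ∑ i, w i * ((2:ℝ)⁻¹ • (indVec n A + indVec n B)) i
      = 2⁻¹ * ((∑ i ∈ A, w i) + (∑ i ∈ B, w i)) := by
  have h : ∀ i ∈ (univ : Finset (Fin n)), w i * ((2:ℝ)⁻¹ • (indVec n A + indVec n B)) i
      = 2⁻¹ * (w i * indVec n A i + w i * indVec n B i) := by
    intro i _
    simp only [Pi.smul_apply, Pi.add_apply, smul_eq_mul]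
    ring
  rw [sum_congr rfl h, ← mul_sum, sum_add_distrib, eval_ind, eval_ind]

theorem sum_exch {n : ℕ} (w : Fin n → ℝ) {B : Finset (Fin n)} {a b : Fin n}
    (haB : a ∉ B) (hbB : b ∈ B) :
    ∑ i ∈ insert a (B.erase b), w i = (∑ i ∈ B, w i) - w b + w a := by
  rw [sum_insert (fun h => haB (mem_of_mem_erase h)), sum_erase_eq_sub hbB]
  ring

theorem card_exch {n : ℕ} {B : Finset (Fin n)} {a b : Fin n}
    (haB : a ∉ B) (hbB : b ∈ B) :
    (insert a (B.erase b)).card = B.card := by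
  have h0 : 0 < B.card := card_pos.mpr ⟨b, hbB⟩
  rw [card_insert_of_notMem (fun h => haB (mem_of_mem_erase h)), card_erase_of_mem hbB]
  omega

theorem exch_inter {n : ℕ} {B : Finset (Fin n)} {a b : Fin n}
    (haB : a ∉ B) (hbB : b ∈ B) :
    insert a (B.erase b) ∩ B = B.erase b := by
  ext x
  simp only [mem_inter, mem_insert, mem_erase]
  constructor
  · rintro ⟨rfl | ⟨h1, h2⟩, hxB⟩
    · exact absurd hxB haB
    · exact ⟨h1, hxB⟩
  · rintro ⟨h1, h2⟩
    exact ⟨Or.inr ⟨h1, h2⟩, h2⟩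

theorem nonempty_of_witness {n : ℕ} (𝓑 : Finset (Finset (Fin n))) (B E I : Finset (Fin n))
    {a b : Fin n} (haB : a ∉ B) (hbB : b ∈ B)
    (hcond : (a ∈ E ∧ b < a) ∨ (b ∈ I ∧ a < b))
    (hbas : insert a (B.erase b) ∈ 𝓑) (hB : B ∈ 𝓑) :
    ¬ (polytope 𝓑 ∩ PBEI B E I = ∅) := by
  set A := insert a (B.erase b) with hA
  set p := (2:ℝ)⁻¹ • (indVec n A + indVec n B) with hp
  have hAV : A ∈ VSet B E I := ⟨a, haB, b, hbB, rfl, hcond⟩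
  have hpP : p ∈ PBEI B E I := subset_convexHull ℝ _ (Set.mem_image_of_mem _ hAV)
  have h1 : indVec n A ∈ polytope 𝓑 := subset_convexHull ℝ _ ⟨A, mem_coe.mpr hbas, rfl⟩
  have h2 : indVec n B ∈ polytope 𝓑 := subset_convexHull ℝ _ ⟨B, mem_coe.mpr hB, rfl⟩
  have hpQ : p ∈ polytope 𝓑 := by
    have hc := (convex_convexHull ℝ (indVec n '' ↑𝓑)) h1 h2
      (by norm_num : (0:ℝ) ≤ 2⁻¹) (by norm_num : (0:ℝ) ≤ 2⁻¹) (by norm_num : (2:ℝ)⁻¹ + 2⁻¹ = 1)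
    rw [hp, smul_add]
    exact hc
  intro h
  rw [Set.eq_empty_iff_forall_notMem] at h
  exact h p ⟨hpQ, hpP⟩

/-- For any matroid `M`, `Q(M) ∩ P(B,E,I) = ∅` iff `B` is not a basis of `M`, or
`B` is a basis of `M` with `E ⊆ E(B)` and `I ⊆ I(B)`. -/
theorem statement_15 (n : ℕ) (𝓑 : Finset (Finset (Fin n))) (hM : IsBases 𝓑)
    (B E I : Finset (Fin n)) (hE : ∀ a ∈ E, a ∉ B) (hI : I ⊆ B) :
    polytope 𝓑 ∩ PBEI B E I = ∅ ↔
      (B ∉ 𝓑 ∨ (B ∈ 𝓑 ∧ (∀ a ∈ E, ExtActive 𝓑 B a) ∧ ∀ b ∈ I, IntActive 𝓑 B b)) := by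
  constructor
  · -- empty → activity (contrapositive on each element)
    intro hempty
    by_cases hB : B ∈ 𝓑
    · right
      refine ⟨hB, ?_, ?_⟩
      · intro a haE
        refine ⟨hE a haE, fun b hbB hbas => ?_⟩
        by_contra hnlt
        have hba : b < a :=
          lt_of_le_of_ne (not_lt.mp hnlt) (fun h => (hE a haE) (h ▸ hbB))
        exact nonempty_of_witness 𝓑 B E I (hE a haE) hbB (Or.inl ⟨haE, hba⟩) hbas hB hempty
      · intro b hbI
        refine ⟨hI hbI, fun a haB hbas => ?_⟩
        by_contra hnlt
        have hab : a < b :=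
          lt_of_le_of_ne (not_lt.mp hnlt) (fun h => haB (h ▸ hI hbI))
        exact nonempty_of_witness 𝓑 B E I haB (hI hbI) (Or.inr ⟨hbI, hab⟩) hbas hB hempty
    · exact Or.inl hB
  · intro h
    rcases h with hB | ⟨hB, hEact, hIact⟩
    · -- B not a basis
      rw [Set.eq_empty_iff_forall_notMem]
      rintro p ⟨hpQ, hpP⟩
      rcases 𝓑.eq_empty_or_nonempty with rfl | ⟨C₀, hC₀⟩
      · simp [polytope] at hpQ
      -- the all-ones functional
      have hθQle : ∑ i, (1:ℝ) * p i ≤ (C₀.card : ℝ) := by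
        refine hull_le ?_ hpQ
        rintro x ⟨C, hC, rfl⟩
        rw [eval_ind]
        simp only [sum_const, nsmul_eq_mul, mul_one]
        exact_mod_cast Nat.cast_le.mpr (le_of_eq (bases_card_aux hM (C \ C₀).card C C₀ (mem_coe.mp hC) hC₀ rfl))
      have hθQge : (C₀.card : ℝ) ≤ ∑ i, (1:ℝ) * p i := by
        refine hull_ge ?_ hpQ
        rintro x ⟨C, hC, rfl⟩
        rw [eval_ind]
        simp only [sum_const, nsmul_eq_mul, mul_one]
        exact_mod_cast Nat.cast_le.mpr (le_of_eq (bases_card_aux hM (C₀ \ C).card C₀ C hC₀ (mem_coe.mp hC) rfl))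
      have hθPle : ∑ i, (1:ℝ) * p i ≤ (B.card : ℝ) := by
        refine hull_le ?_ hpP
        rintro x ⟨A, hA, rfl⟩
        obtain ⟨a, haB, b, hbB, hAeq, -⟩ := hA
        rw [eval_mid]
        simp only [sum_const, nsmul_eq_mul, mul_one]
        rw [hAeq]
        rw [show ((insert a (B.erase b)).card : ℝ) = (B.card : ℝ) from by rw [card_exch haB hbB]]
        ring_nf
        rfl
      have hθPge : (B.card : ℝ) ≤ ∑ i, (1:ℝ) * p i := by
        refine hull_ge ?_ hpP
        rintro x ⟨A, hA, rfl⟩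
        obtain ⟨a, haB, b, hbB, hAeq, -⟩ := hA
        rw [eval_mid]
        simp only [sum_const, nsmul_eq_mul, mul_one]
        rw [hAeq]
        rw [show ((insert a (B.erase b)).card : ℝ) = (B.card : ℝ) from by rw [card_exch haB hbB]]
        ring_nf
        rfl
      have hBC₀ : C₀.card = B.card := by
        have : (C₀.card : ℝ) = (B.card : ℝ) := le_antisymm (hθQge.trans hθPle) (hθPge.trans hθQle)
        exact_mod_cast this
      -- the indicator-of-B functional
      set ψ : Fin n → ℝ := fun i => if i ∈ B then 1 else 0 with hψ
      have hψeval : ∀ C : Finset (Fin n), ∑ i ∈ C, ψ i = ((C ∩ B).card : ℝ) := by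
        intro C
        rw [hψ]
        simp only [sum_ite_mem, sum_const, nsmul_eq_mul, mul_one]
      have hψQ : ∑ i, ψ i * p i ≤ (B.card : ℝ) - 1 := by
        refine hull_le ?_ hpQ
        rintro x ⟨C, hC, rfl⟩
        rw [eval_ind, hψeval]
        have hCB : C ≠ B := fun h => hB (h ▸ mem_coe.mp hC)
        have hCcard : C.card = B.card := by
          rw [← hBC₀]
          exact bases_card_aux hM (C \ C₀).card C C₀ (mem_coe.mp hC) hC₀ rfl
        have hlt : (C ∩ B).card < B.card := by
          rcases lt_or_eq_of_le (card_le_card (inter_subset_right : C ∩ B ⊆ B)) with h | h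
          · exact h
          · exfalso
            have h1 : C ∩ B = B := eq_of_subset_of_card_le inter_subset_right (le_of_eq h.symm)
            have h2 : B ⊆ C := by
              intro x hx
              have : x ∈ C ∩ B := h1.symm ▸ hx
              exact (mem_inter.mp this).1
            exact hCB (eq_of_subset_of_card_le h2 (le_of_eq hCcard)).symm
        have hr : ((C ∩ B).card : ℝ) + 1 ≤ (B.card : ℝ) := by exact_mod_cast hlt
        linarith
      have hψP : (B.card : ℝ) - 2⁻¹ ≤ ∑ i, ψ i * p i := by
        refine hull_ge ?_ hpP
        rintro x ⟨A, hA, rfl⟩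
        obtain ⟨a, haB, b, hbB, hAeq, -⟩ := hA
        rw [eval_mid, hψeval, hψeval, hAeq, exch_inter haB hbB]
        have h0 : 0 < B.card := card_pos.mpr ⟨b, hbB⟩
        rw [card_erase_of_mem hbB, inter_self]
        have : ((B.card - 1 : ℕ) : ℝ) = (B.card : ℝ) - 1 := by
          push_cast [h0]
          ring
        rw [this]
        ring_nf
        linarith [le_refl (B.card : ℝ)]
      linarith
    · -- B a basis with all of E, I active: use the weight vector
      rw [Set.eq_empty_iff_forall_notMem]
      rintro p ⟨hpQ, hpP⟩
      have hQ : ∑ i, wgt B E I i * p i ≤ ∑ i ∈ B, wgt B E I i := by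
        refine hull_le ?_ hpQ
        rintro x ⟨C, hC, rfl⟩
        rw [eval_ind]
        exact wgt_basis_le hM hB hE hI hEact hIact (mem_coe.mp hC)
      have hP : (∑ i ∈ B, wgt B E I i) + 2⁻¹ ≤ ∑ i, wgt B E I i * p i := by
        refine hull_ge ?_ hpP
        rintro x ⟨A, hA, rfl⟩
        obtain ⟨a, haB, b, hbB, hAeq, hcond⟩ := hA
        rw [eval_mid, hAeq, sum_exch _ haB hbB]
        have := wgt_pair hE hI haB hbB hcond
        linarith
      linarith
end
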